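/- arXiv:2111.01675 — 7 statements merged into one kernel-verified Lean document; each statement's English description precedes it below -/
import Mathlib

section
/- Let I ⊆ ℝ be an open interval, D ⊆ ℝ^m open, G an m×m real symmetric positive definite matrix, f : I × D × ℝ^m → ℝ^m continuous, and φ : I × D × ℝ^m → ℝ^n continuously differentiable with rank φ_v(t,x,v) = n (n < m) for all (t,x,v). Define N(t,x,v) = −φ_vᵀ (φ_v G⁻¹ φ_vᵀ)⁻¹ (φ_t + φ_x v + φ_v G⁻¹ f)(t,x,v). Then for every twice differentiable curve x : I → D satisfying G ẍ(t) = f(t, x(t), ẋ(t)) + N(t, x(t), ẋ(t)) for all t ∈ I, the function t ↦ φ(t, x(t), ẋ(t)) is constant on I; i.e., the components of φ are first integrals of the system G ẍ = f + N. -/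
open Matrix

lemma aux_transpose_mulVec_injective {m n : ℕ} (A : Matrix (Fin n) (Fin m) ℝ)
    (hA : A.rank = n) : Function.Injective (Aᵀ.mulVec) := by
  have h1 : Aᵀ.rank = n := by rw [Matrix.rank_transpose, hA]
  have h2 := LinearMap.finrank_range_add_finrank_ker (Aᵀ.mulVecLin)
  rw [show Module.finrank ℝ (LinearMap.range Aᵀ.mulVecLin) = n from h1] at h2
  have h3 : Module.finrank ℝ (Fin n → ℝ) = n := by simp
  rw [h3] at h2
  have h4 : LinearMap.ker Aᵀ.mulVecLin = ⊥ :=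
    Submodule.finrank_eq_zero.mp (by omega)
  exact LinearMap.ker_eq_bot.mp h4

lemma aux_posDef {m n : ℕ} (A : Matrix (Fin n) (Fin m) ℝ) (hA : A.rank = n)
    (M : Matrix (Fin m) (Fin m) ℝ) (hM : M.PosDef) : (A * M * Aᵀ).PosDef := by
  refine PosDef.of_dotProduct_mulVec_pos ?_ ?_
  · have hH := hM.isHermitian
    show (A * M * Aᵀ)ᴴ = A * M * Aᵀ
    rw [conjTranspose_mul, conjTranspose_mul, hH.eq]
    have : ∀ {p q : ℕ} (B : Matrix (Fin p) (Fin q) ℝ), Bᴴ = Bᵀ := by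
      intro p q B; ext i j; simp [conjTranspose_apply]
    rw [this, this, transpose_transpose, Matrix.mul_assoc]
  · intro y hy
    have hne : Aᵀ.mulVec y ≠ 0 := by
      intro h
      exact hy (aux_transpose_mulVec_injective A hA (by simpa using h))
    have := hM.dotProduct_mulVec_pos hne
    have hstar : star y = y := rfl
    calc (0:ℝ) < star (Aᵀ *ᵥ y) ⬝ᵥ (M *ᵥ (Aᵀ *ᵥ y)) := this
    _ = star y ⬝ᵥ ((A * M * Aᵀ) *ᵥ y) := by
        simp only [← Matrix.mulVec_mulVec, star_trivial, hstar]
        rw [dotProduct_mulVec y A, ← Matrix.mulVec_transpose]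

lemma aux_isUnit_det {m n : ℕ} (A : Matrix (Fin n) (Fin m) ℝ) (hA : A.rank = n)
    (M : Matrix (Fin m) (Fin m) ℝ) (hM : M.PosDef) : IsUnit (A * M * Aᵀ).det :=
  (aux_posDef A hA M hM).det_pos.ne'.isUnit

lemma aux_clm_snd {m n : ℕ}
    (L : (ℝ × (Fin m → ℝ) × (Fin m → ℝ)) →L[ℝ] (Fin n → ℝ)) (w : Fin m → ℝ) :
    L (0, w, 0) = ∑ j, w j • L (0, Pi.single j 1, 0) := by
  have hw : ((0:ℝ), w, (0 : Fin m → ℝ))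
      = ∑ j, w j • ((0:ℝ), (Pi.single j 1 : Fin m → ℝ), (0 : Fin m → ℝ)) := by
    refine Prod.ext ?_ (Prod.ext ?_ ?_)
    · simp [Prod.fst_sum]
    · funext k
      simp [Prod.snd_sum, Prod.fst_sum, Finset.sum_apply, Pi.single_apply,
        mul_ite, Finset.sum_ite_eq, Finset.sum_ite_eq']
    · simp [Prod.snd_sum]
  rw [hw, map_sum]
  simp only [_root_.map_smul]

lemma aux_clm_trd {m n : ℕ}
    (L : (ℝ × (Fin m → ℝ) × (Fin m → ℝ)) →L[ℝ] (Fin n → ℝ)) (w : Fin m → ℝ) :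
    L (0, 0, w) = ∑ j, w j • L (0, 0, Pi.single j 1) := by
  have hw : ((0:ℝ), (0 : Fin m → ℝ), w)
      = ∑ j, w j • ((0:ℝ), (0 : Fin m → ℝ), (Pi.single j 1 : Fin m → ℝ)) := by
    refine Prod.ext ?_ (Prod.ext ?_ ?_)
    · simp [Prod.fst_sum]
    · simp [Prod.snd_sum, Prod.fst_sum]
    · funext k
      simp [Prod.snd_sum, Finset.sum_apply, Pi.single_apply, mul_ite,
        Finset.sum_ite_eq, Finset.sum_ite_eq']
  rw [hw, map_sum]
  simp only [_root_.map_smul]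

/-- For the system `G ẍ = f + N` with the reaction force
`N = -φ_vᵀ (φ_v G⁻¹ φ_vᵀ)⁻¹ (φ_t + φ_x v + φ_v G⁻¹ f)` of the ideal
constraints `φ = 0`, the function `t ↦ φ(t, x(t), ẋ(t))` is constant along
every solution: the components of `φ` are first integrals. -/
theorem constraints_are_first_integrals {m n : ℕ} (hnm : n < m)
    (a b : ℝ) (D : Set (Fin m → ℝ)) (hD : IsOpen D)
    (G : Matrix (Fin m) (Fin m) ℝ) (hGsymm : G.IsSymm) (hGpd : G.PosDef)
    (f : ℝ → (Fin m → ℝ) → (Fin m → ℝ) → (Fin m → ℝ))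
    (hf : ContinuousOn (fun p : ℝ × (Fin m → ℝ) × (Fin m → ℝ) => f p.1 p.2.1 p.2.2)
      (Set.Ioo a b ×ˢ D ×ˢ Set.univ))
    (φ : ℝ → (Fin m → ℝ) → (Fin m → ℝ) → (Fin n → ℝ))
    (hφ : ContDiffOn ℝ 1 (fun p : ℝ × (Fin m → ℝ) × (Fin m → ℝ) => φ p.1 p.2.1 p.2.2)
      (Set.Ioo a b ×ˢ D ×ˢ Set.univ))
    (φt : ℝ → (Fin m → ℝ) → (Fin m → ℝ) → (Fin n → ℝ))
    (hφt : ∀ t x v, φt t x v = deriv (fun s => φ s x v) t)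
    (φx φv : ℝ → (Fin m → ℝ) → (Fin m → ℝ) → Matrix (Fin n) (Fin m) ℝ)
    (hφx : ∀ t x v, φx t x v =
      Matrix.of fun i j => fderiv ℝ (fun z => φ t z v) x (Pi.single j 1) i)
    (hφv : ∀ t x v, φv t x v =
      Matrix.of fun i j => fderiv ℝ (fun w => φ t x w) v (Pi.single j 1) i)
    (hrank : ∀ t ∈ Set.Ioo a b, ∀ x ∈ D, ∀ v : Fin m → ℝ, (φv t x v).rank = n)
    (N : ℝ → (Fin m → ℝ) → (Fin m → ℝ) → (Fin m → ℝ))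
    (hN : ∀ t x v, N t x v =
      -((φv t x v)ᵀ.mulVec ((φv t x v * G⁻¹ * (φv t x v)ᵀ)⁻¹.mulVec
        (φt t x v + (φx t x v).mulVec v + (φv t x v).mulVec (G⁻¹.mulVec (f t x v))))))
    (x x' x'' : ℝ → (Fin m → ℝ))
    (hmem : ∀ t ∈ Set.Ioo a b, x t ∈ D)
    (hx' : ∀ t ∈ Set.Ioo a b, HasDerivAt x (x' t) t)
    (hx'' : ∀ t ∈ Set.Ioo a b, HasDerivAt x' (x'' t) t)
    (heq : ∀ t ∈ Set.Ioo a b,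
      G.mulVec (x'' t) = f t (x t) (x' t) + N t (x t) (x' t)) :
    ∀ s ∈ Set.Ioo a b, ∀ t ∈ Set.Ioo a b,
      φ s (x s) (x' s) = φ t (x t) (x' t) := by
  set U : Set (ℝ × (Fin m → ℝ) × (Fin m → ℝ)) := Set.Ioo a b ×ˢ D ×ˢ Set.univ with hUdef
  have hU : IsOpen U := isOpen_Ioo.prod (hD.prod isOpen_univ)
  set Φ : ℝ × (Fin m → ℝ) × (Fin m → ℝ) → (Fin n → ℝ) :=
    fun p => φ p.1 p.2.1 p.2.2 with hΦdef
  have key : ∀ t ∈ Set.Ioo a b, HasDerivAt (fun u => φ u (x u) (x' u)) 0 t := by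
    intro t ht
    have hmemU : ((t, x t, x' t) : ℝ × (Fin m → ℝ) × (Fin m → ℝ)) ∈ U :=
      ⟨ht, hmem t ht, trivial⟩
    have hdiff : DifferentiableAt ℝ Φ (t, x t, x' t) :=
      (hφ.differentiableOn one_ne_zero).differentiableAt (hU.mem_nhds hmemU)
    set L := fderiv ℝ Φ (t, x t, x' t) with hLdef
    -- the t-partial
    have hL1 : φt t (x t) (x' t) = L (1, 0, 0) := by
      have hcurve : HasDerivAt
          (fun s : ℝ => ((s, x t, x' t) : ℝ × (Fin m → ℝ) × (Fin m → ℝ)))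
          ((1 : ℝ), (0 : Fin m → ℝ), (0 : Fin m → ℝ)) t :=
        HasDerivAt.prodMk (hasDerivAt_id t) (HasDerivAt.prodMk (hasDerivAt_const t (x t)) (hasDerivAt_const t (x' t)))
      have hc := hdiff.hasFDerivAt.comp_hasDerivAt t hcurve
      have hc' : HasDerivAt (fun s => φ s (x t) (x' t)) (L (1, 0, 0)) t := hc
      rw [hφt]
      exact hc'.deriv
    -- the x-partial
    have hLx : ∀ w : Fin m → ℝ,
        (φx t (x t) (x' t)).mulVec w = L (0, w, 0) := by
      have hinc : HasFDerivAt
          (fun z : Fin m → ℝ => ((t, z, x' t) : ℝ × (Fin m → ℝ) × (Fin m → ℝ)))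
          (((0 : (Fin m → ℝ) →L[ℝ] ℝ)).prod
            ((ContinuousLinearMap.id ℝ (Fin m → ℝ)).prod 0)) (x t) :=
        HasFDerivAt.prodMk (hasFDerivAt_const t (x t))
          (HasFDerivAt.prodMk (hasFDerivAt_id (x t)) (hasFDerivAt_const (x' t) (x t)))
      have hax : HasFDerivAt (fun z => φ t z (x' t))
          (L.comp (((0 : (Fin m → ℝ) →L[ℝ] ℝ)).prod
            ((ContinuousLinearMap.id ℝ (Fin m → ℝ)).prod 0))) (x t) :=
        by have := HasFDerivAt.comp (x t) hdiff.hasFDerivAt hinc; exact this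
      have hfd := hax.fderiv
      intro w
      funext i
      rw [hφx]
      have hRHS : L (0, w, 0) i = ∑ j, w j * L (0, Pi.single j 1, 0) i := by
        rw [aux_clm_snd]
        simp [Finset.sum_apply]
      rw [hRHS]
      simp only [Matrix.mulVec, dotProduct, Matrix.of_apply, hfd,
        ContinuousLinearMap.comp_apply, ContinuousLinearMap.prod_apply,
        ContinuousLinearMap.zero_apply, ContinuousLinearMap.id_apply]
      exact Finset.sum_congr rfl fun j _ => mul_comm _ _
    -- the v-partial
    have hLv : ∀ w : Fin m → ℝ,
        (φv t (x t) (x' t)).mulVec w = L (0, 0, w) := by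
      have hinc : HasFDerivAt
          (fun z : Fin m → ℝ => ((t, x t, z) : ℝ × (Fin m → ℝ) × (Fin m → ℝ)))
          (((0 : (Fin m → ℝ) →L[ℝ] ℝ)).prod
            ((0 : (Fin m → ℝ) →L[ℝ] (Fin m → ℝ)).prod
              (ContinuousLinearMap.id ℝ (Fin m → ℝ)))) (x' t) :=
        HasFDerivAt.prodMk (hasFDerivAt_const t (x' t))
          (HasFDerivAt.prodMk (hasFDerivAt_const (x t) (x' t)) (hasFDerivAt_id (x' t)))
      have hax : HasFDerivAt (fun z => φ t (x t) z)
          (L.comp (((0 : (Fin m → ℝ) →L[ℝ] ℝ)).prod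
            ((0 : (Fin m → ℝ) →L[ℝ] (Fin m → ℝ)).prod
              (ContinuousLinearMap.id ℝ (Fin m → ℝ))))) (x' t) :=
        by have := HasFDerivAt.comp (x' t) hdiff.hasFDerivAt hinc; exact this
      have hfd := hax.fderiv
      intro w
      funext i
      rw [hφv]
      have hRHS : L (0, 0, w) i = ∑ j, w j * L (0, 0, Pi.single j 1) i := by
        rw [aux_clm_trd]
        simp [Finset.sum_apply]
      rw [hRHS]
      simp only [Matrix.mulVec, dotProduct, Matrix.of_apply, hfd,
        ContinuousLinearMap.comp_apply, ContinuousLinearMap.prod_apply,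
        ContinuousLinearMap.zero_apply, ContinuousLinearMap.id_apply]
      exact Finset.sum_congr rfl fun j _ => mul_comm _ _
    -- derivative of the composite
    have hcurve : HasDerivAt
        (fun u : ℝ => ((u, x u, x' u) : ℝ × (Fin m → ℝ) × (Fin m → ℝ)))
        ((1 : ℝ), x' t, x'' t) t :=
      HasDerivAt.prodMk (hasDerivAt_id t) (HasDerivAt.prodMk (hx' t ht) (hx'' t ht))
    have hgd : HasDerivAt (fun u => φ u (x u) (x' u)) (L (1, x' t, x'' t)) t :=
      by have := HasFDerivAt.comp_hasDerivAt t hdiff.hasFDerivAt hcurve; exact this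
    suffices hzero : L (1, x' t, x'' t) = 0 by rwa [hzero] at hgd
    have hsplit : ((1 : ℝ), x' t, x'' t)
        = ((1:ℝ), (0 : Fin m → ℝ), (0 : Fin m → ℝ)) + (0, x' t, 0) + (0, 0, x'' t) := by
      simp [Prod.ext_iff]
    rw [hsplit, map_add, map_add, ← hL1, ← hLx, ← hLv]
    -- now the algebra
    have hGdet : IsUnit G.det := (Matrix.isUnit_iff_isUnit_det G).mp hGpd.isUnit
    have hBdet : IsUnit (φv t (x t) (x' t) * G⁻¹ * (φv t (x t) (x' t))ᵀ).det :=
      aux_isUnit_det _ (hrank t ht (x t) (hmem t ht) (x' t)) _ hGpd.inv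
    have hx2 : x'' t = G⁻¹.mulVec (f t (x t) (x' t)) + G⁻¹.mulVec (N t (x t) (x' t)) := by
      have h : G⁻¹.mulVec (G.mulVec (x'' t))
          = G⁻¹.mulVec (f t (x t) (x' t) + N t (x t) (x' t)) := by rw [heq t ht]
      rwa [Matrix.mulVec_mulVec, Matrix.nonsing_inv_mul G hGdet, Matrix.one_mulVec,
        Matrix.mulVec_add] at h
    have hAN : (φv t (x t) (x' t)).mulVec (G⁻¹.mulVec (N t (x t) (x' t)))
        = -(φt t (x t) (x' t) + (φx t (x t) (x' t)).mulVec (x' t)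
            + (φv t (x t) (x' t)).mulVec (G⁻¹.mulVec (f t (x t) (x' t)))) := by
      rw [hN]
      simp only [Matrix.mulVec_neg, Matrix.mulVec_mulVec]
      congr 1
      have hone : φv t (x t) (x' t) * (G⁻¹ * ((φv t (x t) (x' t))ᵀ *
          (φv t (x t) (x' t) * G⁻¹ * (φv t (x t) (x' t))ᵀ)⁻¹)) = 1 := by
        rw [← Matrix.mul_assoc, ← Matrix.mul_assoc]
        exact Matrix.mul_nonsing_inv _ hBdet
      rw [hone, Matrix.one_mulVec]
    rw [hx2, Matrix.mulVec_add, hAN]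
    abel
  intro s hs t ht
  have hdOn : DifferentiableOn ℝ (fun u => φ u (x u) (x' u)) (Set.Ioo a b) :=
    fun u hu => ((key u hu).differentiableAt).differentiableWithinAt
  have h0 : ∀ u ∈ Set.Ioo a b,
      fderivWithin ℝ (fun u => φ u (x u) (x' u)) (Set.Ioo a b) u = 0 := by
    intro u hu
    have h1 : HasFDerivAt (fun u => φ u (x u) (x' u)) (0 : ℝ →L[ℝ] (Fin n → ℝ)) u := by
      have h2 := hasDerivAt_iff_hasFDerivAt.mp (key u hu)
      have h3 : ContinuousLinearMap.toSpanSingleton ℝ (0 : Fin n → ℝ) = 0 := by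
        ext z; simp
      rwa [h3] at h2
    exact h1.hasFDerivWithinAt.fderivWithin (isOpen_Ioo.uniqueDiffOn u hu)
  exact (convex_Ioo a b).is_const_of_fderivWithin_eq_zero hdOn h0 hs ht
end

section
/- Let I ⊆ ℝ be an open interval, D ⊆ ℝ^m open, G an m×m real symmetric positive definite matrix, f : I × D × ℝ^m → ℝ^m continuous, and φ : I × D × ℝ^m → ℝ^n continuously differentiable with rank φ_v(t,x,v) = n (n < m) for all (t,x,v). Let x : I → D be twice differentiable with φ(t, x(t), ẋ(t)) = 0 for all t ∈ I, and suppose x satisfies the general equation of dynamics: for every t ∈ I and every ξ ∈ ℝ^m with φ_v(t, x(t), ẋ(t)) ξ = 0 one has ⟨G ẍ(t) − f(t, x(t), ẋ(t)), ξ⟩ = 0. Then x satisfies G ẍ(t) = f(t, x(t), ẋ(t)) + N(t, x(t), ẋ(t)) for all t ∈ I, where N(t,x,v) = −φ_vᵀ (φ_v G⁻¹ φ_vᵀ)⁻¹ (φ_t + φ_x v + φ_v G⁻¹ f)(t,x,v). -/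
open Matrix

/-- Full row rank implies injectivity of the transpose action. -/
lemma aux_transpose_inj {m n : ℕ} (A : Matrix (Fin n) (Fin m) ℝ) (h : A.rank = n)
    (u : Fin n → ℝ) (hu : Aᵀ *ᵥ u = 0) : u = 0 := by
  have h1 : Aᵀ.rank = n := by rw [Matrix.rank_transpose]; exact h
  have h2 := LinearMap.finrank_range_add_finrank_ker Aᵀ.mulVecLin
  rw [show Module.finrank ℝ (LinearMap.range Aᵀ.mulVecLin) = n from h1,
    Module.finrank_fin_fun] at h2
  have h3 : Module.finrank ℝ (LinearMap.ker Aᵀ.mulVecLin) = 0 := by omega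
  have h4 : LinearMap.ker Aᵀ.mulVecLin = ⊥ := Submodule.finrank_eq_zero.mp h3
  have h5 : u ∈ LinearMap.ker Aᵀ.mulVecLin := by
    rw [LinearMap.mem_ker, Matrix.mulVecLin_apply]; exact hu
  rw [h4, Submodule.mem_bot] at h5; exact h5

lemma aux_posdef_dot_eq_zero {k : ℕ} {M : Matrix (Fin k) (Fin k) ℝ} (hM : M.PosDef)
    {y : Fin k → ℝ} (hy : y ⬝ᵥ (M *ᵥ y) = 0) : y = 0 := by
  by_contra h
  have := hM.dotProduct_mulVec_pos h
  rw [star_trivial, hy] at this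
  exact lt_irrefl 0 this

/-- If a constrained curve (`φ(t, x(t), ẋ(t)) = 0`) satisfies the general
equation of dynamics — `⟨G ẍ - f, ξ⟩ = 0` for all virtual displacements `ξ`
with `φ_v ξ = 0` — then it satisfies `G ẍ = f + N` with the reaction force
`N = -φ_vᵀ (φ_v G⁻¹ φ_vᵀ)⁻¹ (φ_t + φ_x v + φ_v G⁻¹ f)`. -/
theorem general_equation_of_dynamics_implies_newton {m n : ℕ} (hnm : n < m)
    (a b : ℝ) (D : Set (Fin m → ℝ)) (hD : IsOpen D)
    (G : Matrix (Fin m) (Fin m) ℝ) (hGsymm : G.IsSymm) (hGpd : G.PosDef)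
    (f : ℝ → (Fin m → ℝ) → (Fin m → ℝ) → (Fin m → ℝ))
    (hf : ContinuousOn (fun p : ℝ × (Fin m → ℝ) × (Fin m → ℝ) => f p.1 p.2.1 p.2.2)
      (Set.Ioo a b ×ˢ D ×ˢ Set.univ))
    (φ : ℝ → (Fin m → ℝ) → (Fin m → ℝ) → (Fin n → ℝ))
    (hφ : ContDiffOn ℝ 1 (fun p : ℝ × (Fin m → ℝ) × (Fin m → ℝ) => φ p.1 p.2.1 p.2.2)
      (Set.Ioo a b ×ˢ D ×ˢ Set.univ))
    (φt : ℝ → (Fin m → ℝ) → (Fin m → ℝ) → (Fin n → ℝ))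
    (hφt : ∀ t x v, φt t x v = deriv (fun s => φ s x v) t)
    (φx φv : ℝ → (Fin m → ℝ) → (Fin m → ℝ) → Matrix (Fin n) (Fin m) ℝ)
    (hφx : ∀ t x v, φx t x v =
      Matrix.of fun i j => fderiv ℝ (fun z => φ t z v) x (Pi.single j 1) i)
    (hφv : ∀ t x v, φv t x v =
      Matrix.of fun i j => fderiv ℝ (fun w => φ t x w) v (Pi.single j 1) i)
    (hrank : ∀ t ∈ Set.Ioo a b, ∀ x ∈ D, ∀ v : Fin m → ℝ, (φv t x v).rank = n)
    (N : ℝ → (Fin m → ℝ) → (Fin m → ℝ) → (Fin m → ℝ))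
    (hN : ∀ t x v, N t x v =
      -((φv t x v)ᵀ.mulVec ((φv t x v * G⁻¹ * (φv t x v)ᵀ)⁻¹.mulVec
        (φt t x v + (φx t x v).mulVec v + (φv t x v).mulVec (G⁻¹.mulVec (f t x v))))))
    (x x' x'' : ℝ → (Fin m → ℝ))
    (hmem : ∀ t ∈ Set.Ioo a b, x t ∈ D)
    (hx' : ∀ t ∈ Set.Ioo a b, HasDerivAt x (x' t) t)
    (hx'' : ∀ t ∈ Set.Ioo a b, HasDerivAt x' (x'' t) t)
    (hconstr : ∀ t ∈ Set.Ioo a b, φ t (x t) (x' t) = 0)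
    (hged : ∀ t ∈ Set.Ioo a b, ∀ ξ : Fin m → ℝ,
      (φv t (x t) (x' t)).mulVec ξ = 0 →
        (G.mulVec (x'' t) - f t (x t) (x' t)) ⬝ᵥ ξ = 0) :
    ∀ t ∈ Set.Ioo a b,
      G.mulVec (x'' t) = f t (x t) (x' t) + N t (x t) (x' t) := by
  intro t ht
  -- Set-up: the full map and its total derivative at `p = (t, x t, x' t)`.
  set Φ : ℝ × (Fin m → ℝ) × (Fin m → ℝ) → Fin n → ℝ :=
    fun p => φ p.1 p.2.1 p.2.2 with hΦ
  set S : Set (ℝ × (Fin m → ℝ) × (Fin m → ℝ)) := Set.Ioo a b ×ˢ D ×ˢ Set.univ with hS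
  have hSopen : IsOpen S := isOpen_Ioo.prod (hD.prod isOpen_univ)
  have hp : ((t, x t, x' t) : ℝ × (Fin m → ℝ) × (Fin m → ℝ)) ∈ S := by
    refine ⟨ht, hmem t ht, trivial⟩
  have hdiff : DifferentiableAt ℝ Φ (t, x t, x' t) :=
    (hφ.differentiableOn one_ne_zero).differentiableAt (hSopen.mem_nhds hp)
  set L := fderiv ℝ Φ (t, x t, x' t) with hLdef
  have hL : HasFDerivAt Φ L (t, x t, x' t) := hdiff.hasFDerivAt
  -- partial derivative in `t`
  have hcurve1 : HasDerivAt (fun s : ℝ => ((s, x t, x' t) : ℝ × (Fin m → ℝ) × (Fin m → ℝ)))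
      (1, 0, 0) t :=
    HasDerivAt.prodMk (hasDerivAt_id t) (HasDerivAt.prodMk (hasDerivAt_const t (x t)) (hasDerivAt_const t (x' t)))
  have hpt : HasDerivAt (fun s => φ s (x t) (x' t)) (L (1, 0, 0)) t :=
    by have := HasFDerivAt.comp_hasDerivAt t hL hcurve1; exact this
  have hφt' : φt t (x t) (x' t) = L (1, 0, 0) := by
    rw [hφt t (x t) (x' t)]; exact hpt.deriv
  -- partial derivative in `x`
  have hinclx : HasFDerivAt (fun z : Fin m → ℝ => ((t, z, x' t) : ℝ × (Fin m → ℝ) × (Fin m → ℝ)))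
      ((0 : (Fin m → ℝ) →L[ℝ] ℝ).prod ((ContinuousLinearMap.id ℝ (Fin m → ℝ)).prod 0)) (x t) :=
    HasFDerivAt.prodMk (hasFDerivAt_const t (x t)) (HasFDerivAt.prodMk (hasFDerivAt_id (x t)) (hasFDerivAt_const (x' t) (x t)))
  have hpx : HasFDerivAt (fun z => φ t z (x' t))
      (L.comp ((0 : (Fin m → ℝ) →L[ℝ] ℝ).prod
        ((ContinuousLinearMap.id ℝ (Fin m → ℝ)).prod 0))) (x t) :=
    by have := HasFDerivAt.comp (x t) hL hinclx; exact this
  have hφx' : ∀ j, (fun i => (φx t (x t) (x' t)) i j) = L (0, Pi.single j 1, 0) := by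
    intro j
    funext i
    rw [hφx t (x t) (x' t)]
    show (fderiv ℝ (fun z => φ t z (x' t)) (x t)) (Pi.single j 1) i = _
    rw [hpx.fderiv]
    simp
  -- partial derivative in `v`
  have hinclv : HasFDerivAt (fun w : Fin m → ℝ => ((t, x t, w) : ℝ × (Fin m → ℝ) × (Fin m → ℝ)))
      ((0 : (Fin m → ℝ) →L[ℝ] ℝ).prod ((0 : (Fin m → ℝ) →L[ℝ] (Fin m → ℝ)).prod
        (ContinuousLinearMap.id ℝ (Fin m → ℝ)))) (x' t) :=
    HasFDerivAt.prodMk (hasFDerivAt_const t (x' t)) (HasFDerivAt.prodMk (hasFDerivAt_const (x t) (x' t)) (hasFDerivAt_id (x' t)))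
  have hpv : HasFDerivAt (fun w => φ t (x t) w)
      (L.comp ((0 : (Fin m → ℝ) →L[ℝ] ℝ).prod ((0 : (Fin m → ℝ) →L[ℝ] (Fin m → ℝ)).prod
        (ContinuousLinearMap.id ℝ (Fin m → ℝ))))) (x' t) :=
    by have := HasFDerivAt.comp (x' t) hL hinclv; exact this
  have hφv' : ∀ j, (fun i => (φv t (x t) (x' t)) i j) = L (0, 0, Pi.single j 1) := by
    intro j
    funext i
    rw [hφv t (x t) (x' t)]
    show (fderiv ℝ (fun w => φ t (x t) w) (x' t)) (Pi.single j 1) i = _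
    rw [hpv.fderiv]
    simp
  -- linearity in the second slot
  have hlinx : ∀ u : Fin m → ℝ, L (0, u, 0) = (φx t (x t) (x' t)) *ᵥ u := by
    intro u
    let ℓ : (Fin m → ℝ) →ₗ[ℝ] (Fin n → ℝ) :=
      { toFun := fun u => L (0, u, 0)
        map_add' := by
          intro p q
          rw [← map_add]
          congr 1
          simp
        map_smul' := by
          intro c p
          show L (0, c • p, 0) = c • L (0, p, 0)
          have harg : ((0:ℝ), c • p, (0:Fin m → ℝ)) = c • ((0:ℝ), p, (0:Fin m → ℝ)) := by
            rw [Prod.smul_mk, Prod.smul_mk, smul_zero, smul_zero]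
          rw [harg, ContinuousLinearMap.map_smul] }
    have h := ℓ.pi_apply_eq_sum_univ u
    have hsing : ∀ k : Fin m, (fun j => if k = j then (1:ℝ) else 0) = Pi.single k 1 := by
      intro k; funext j; simp [Pi.single_apply, eq_comm]
    simp only [hsing] at h
    funext i
    show ℓ u i = _
    rw [h, Matrix.mulVec, dotProduct]
    rw [Finset.sum_apply]
    refine Finset.sum_congr rfl fun j _ => ?_
    have hrepr : L (0, Pi.single j 1, 0) i = φx t (x t) (x' t) i j := by
      rw [← hφx' j]
    rw [Pi.smul_apply, show ℓ (Pi.single j 1) = L (0, Pi.single j 1, 0) from rfl,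
      hrepr, smul_eq_mul, mul_comm]
  have hlinv : ∀ u : Fin m → ℝ, L (0, 0, u) = (φv t (x t) (x' t)) *ᵥ u := by
    intro u
    let ℓ : (Fin m → ℝ) →ₗ[ℝ] (Fin n → ℝ) :=
      { toFun := fun u => L (0, 0, u)
        map_add' := by
          intro p q
          rw [← map_add]
          congr 1
          simp
        map_smul' := by
          intro c p
          show L (0, 0, c • p) = c • L (0, 0, p)
          have harg : ((0:ℝ), (0:Fin m → ℝ), c • p) = c • ((0:ℝ), (0:Fin m → ℝ), p) := by
            rw [Prod.smul_mk, Prod.smul_mk, smul_zero, smul_zero]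
          rw [harg, ContinuousLinearMap.map_smul] }
    have h := ℓ.pi_apply_eq_sum_univ u
    have hsing : ∀ k : Fin m, (fun j => if k = j then (1:ℝ) else 0) = Pi.single k 1 := by
      intro k; funext j; simp [Pi.single_apply, eq_comm]
    simp only [hsing] at h
    funext i
    show ℓ u i = _
    rw [h, Matrix.mulVec, dotProduct]
    rw [Finset.sum_apply]
    refine Finset.sum_congr rfl fun j _ => ?_
    have hrepr : L (0, 0, Pi.single j 1) i = φv t (x t) (x' t) i j := by
      rw [← hφv' j]
    rw [Pi.smul_apply, show ℓ (Pi.single j 1) = L (0, 0, Pi.single j 1) from rfl,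
      hrepr, smul_eq_mul, mul_comm]
  -- the derivative of the constraint along the curve vanishes
  have hcurve : HasDerivAt (fun s : ℝ => ((s, x s, x' s) : ℝ × (Fin m → ℝ) × (Fin m → ℝ)))
      (1, x' t, x'' t) t :=
    HasDerivAt.prodMk (hasDerivAt_id t) (HasDerivAt.prodMk (hx' t ht) (hx'' t ht))
  have hΦc : HasDerivAt (fun s => φ s (x s) (x' s)) (L (1, x' t, x'' t)) t :=
    by have := HasFDerivAt.comp_hasDerivAt t hL hcurve; exact this
  have hzero : HasDerivAt (fun s => φ s (x s) (x' s)) 0 t := by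
    refine (hasDerivAt_const t (0 : Fin n → ℝ)).congr_of_eventuallyEq ?_
    filter_upwards [isOpen_Ioo.mem_nhds ht] with s hs
    exact hconstr s hs
  have htot : L (1, x' t, x'' t) = 0 := hΦc.unique hzero
  have hsplit : ((1 : ℝ), x' t, x'' t) =
      ((1 : ℝ), (0 : Fin m → ℝ), (0 : Fin m → ℝ)) + (0, x' t, 0) + (0, 0, x'' t) := by
    simp [Prod.ext_iff]
  have key : φt t (x t) (x' t) + (φx t (x t) (x' t)) *ᵥ (x' t)
      + (φv t (x t) (x' t)) *ᵥ (x'' t) = 0 := by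
    rw [hφt', ← hlinx, ← hlinv, ← map_add, ← map_add, ← hsplit, htot]
  -- Matrix algebra part
  set A := φv t (x t) (x' t) with hAdef
  set c := φt t (x t) (x' t) + (φx t (x t) (x' t)) *ᵥ (x' t) with hcdef
  set B := A * G⁻¹ * Aᵀ with hBdef
  set w := G *ᵥ (x'' t) - f t (x t) (x' t) with hwdef
  have hrk : A.rank = n := hrank t ht (x t) (hmem t ht) (x' t)
  have hGinv : (G⁻¹).PosDef := hGpd.inv
  have hGdet : IsUnit G.det := isUnit_iff_ne_zero.mpr (ne_of_gt hGpd.det_pos)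
  have hATinj : ∀ u : Fin n → ℝ, Aᵀ *ᵥ u = 0 → u = 0 := aux_transpose_inj A hrk
  have hBquad : ∀ u : Fin n → ℝ, u ⬝ᵥ (B *ᵥ u) = (Aᵀ *ᵥ u) ⬝ᵥ (G⁻¹ *ᵥ (Aᵀ *ᵥ u)) := by
    intro u
    rw [hBdef, ← Matrix.mulVec_mulVec, ← Matrix.mulVec_mulVec,
      Matrix.dotProduct_mulVec u A, ← Matrix.mulVec_transpose]
  have hBpd : B.PosDef := by
    refine Matrix.PosDef.of_dotProduct_mulVec_pos ?_ (fun u hu => ?_)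
    · have h1 := (hGinv.posSemidef.mul_mul_conjTranspose_same A).1
      simpa using h1
    · rw [star_trivial, hBquad u]
      exact hGinv.dotProduct_mulVec_pos fun h => hu (hATinj u h)
  have hBdet : IsUnit B.det := isUnit_iff_ne_zero.mpr (ne_of_gt hBpd.det_pos)
  set μ := B⁻¹ *ᵥ (A *ᵥ (G⁻¹ *ᵥ w)) with hμdef
  set ξ := G⁻¹ *ᵥ (w - Aᵀ *ᵥ μ) with hξdef
  have hξker : A *ᵥ ξ = 0 := by
    have e1 : A *ᵥ ξ = A *ᵥ (G⁻¹ *ᵥ w) - A *ᵥ (G⁻¹ *ᵥ (Aᵀ *ᵥ μ)) := by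
      rw [hξdef, Matrix.mulVec_sub, Matrix.mulVec_sub]
    have e2 : A *ᵥ (G⁻¹ *ᵥ (Aᵀ *ᵥ μ)) = B *ᵥ μ := by
      rw [Matrix.mulVec_mulVec, Matrix.mulVec_mulVec, hBdef, Matrix.mul_assoc]
    have e3 : B *ᵥ μ = A *ᵥ (G⁻¹ *ᵥ w) := by
      rw [hμdef, Matrix.mulVec_mulVec, Matrix.mul_nonsing_inv B hBdet, Matrix.one_mulVec]
    rw [e1, e2, e3, sub_self]
  have h1 : w ⬝ᵥ ξ = 0 := hged t ht ξ hξker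
  have h2 : (Aᵀ *ᵥ μ) ⬝ᵥ ξ = 0 := by
    rw [Matrix.mulVec_transpose, ← Matrix.dotProduct_mulVec, hξker, dotProduct_zero]
  have h3 : (w - Aᵀ *ᵥ μ) ⬝ᵥ (G⁻¹ *ᵥ (w - Aᵀ *ᵥ μ)) = 0 := by
    rw [sub_dotProduct, ← hξdef, h1, h2, sub_zero]
  have h4 : w = Aᵀ *ᵥ μ := by
    have := aux_posdef_dot_eq_zero hGinv h3
    linear_combination (norm := module) this
  -- identify μ with the Lagrange multiplier formula
  have hAx'' : A *ᵥ (x'' t) = -c := by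
    rw [hcdef]
    linear_combination (norm := module) key
  have hGinvG : ∀ y : Fin m → ℝ, G⁻¹ *ᵥ (G *ᵥ y) = y := by
    intro y
    rw [Matrix.mulVec_mulVec, Matrix.nonsing_inv_mul G hGdet, Matrix.one_mulVec]
  have hμval : μ = -(B⁻¹ *ᵥ (c + A *ᵥ (G⁻¹ *ᵥ f t (x t) (x' t)))) := by
    rw [hμdef, hwdef, Matrix.mulVec_sub, hGinvG, Matrix.mulVec_sub, hAx'',
      show -c - A *ᵥ (G⁻¹ *ᵥ f t (x t) (x' t))
        = -(c + A *ᵥ (G⁻¹ *ᵥ f t (x t) (x' t))) by ring, Matrix.mulVec_neg]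
  have hNval : N t (x t) (x' t) = Aᵀ *ᵥ μ := by
    rw [hN t (x t) (x' t), hμval, Matrix.mulVec_neg]
  rw [hNval, ← h4, hwdef]
  ring
end

section
/- Let 𝓛 : ℝ × ℝ^m × ℝ^m → ℝ and u : ℝ × ℝ^r → ℝ^m be twice continuously differentiable, and define L : ℝ × ℝ^r × ℝ^r → ℝ by L(t, y, w) = 𝓛(t, u(t,y), u_t(t,y) + u_y(t,y) w). Then for every twice continuously differentiable curve y : I → ℝ^r on an open interval I, setting x(t) = u(t, y(t)) (so that ẋ(t) = u_t(t,y(t)) + u_y(t,y(t)) ẏ(t)), one has the identity [𝓛](t) · u_y(t, y(t)) = [L](t) for all t ∈ I, where [𝓛](t) is the Lagrangian derivative of 𝓛 along the curve x and [L](t) is the Lagrangian derivative of L along the curve y. -/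
open ContinuousLinearMap

/-- The Lagrangian derivative of `L(t, q, v)` along a curve `c`:
`[L]_k(t) = d/dt (∂L/∂v^k)(t, c(t), ċ(t)) - (∂L/∂q^k)(t, c(t), ċ(t))`. -/
noncomputable def lagrangianDeriv {d : ℕ} (L : ℝ → (Fin d → ℝ) → (Fin d → ℝ) → ℝ)
    (c : ℝ → Fin d → ℝ) (t : ℝ) : Fin d → ℝ :=
  fun k =>
    deriv (fun s => fderiv ℝ (L s (c s)) (deriv c s) (Pi.single k 1)) t
      - fderiv ℝ (fun z => L t z (deriv c t)) (c t) (Pi.single k 1)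

lemma clm_sum_single {m : ℕ} (φ : (Fin m → ℝ) →L[ℝ] ℝ) (V : Fin m → ℝ) :
    ∑ i, φ (Pi.single i 1) * V i = φ V := by
  have hV : V = ∑ i, V i • (Pi.single i 1 : Fin m → ℝ) := by
    funext j
    simp [Finset.sum_apply, Pi.single_apply]
  conv_rhs => rw [hV]
  rw [map_sum]
  simp [mul_comm]

set_option maxHeartbeats 2000000 in
/-- Covariance of the Lagrangian derivative under the time-dependent
substitution `x = u(t, y)`: along a curve `y(t)` and its image curve
`x(t) = u(t, y(t))` one has `[𝓛](t) · u_y(t, y(t)) = [L](t)`, where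
`L(t, y, w) = 𝓛(t, u(t,y), u_t(t,y) + u_y(t,y) w)`. -/
theorem lagrangianDeriv_covariant {m r : ℕ}
    (𝓛 : ℝ → (Fin m → ℝ) → (Fin m → ℝ) → ℝ)
    (h𝓛 : ContDiff ℝ 2 (fun p : ℝ × (Fin m → ℝ) × (Fin m → ℝ) => 𝓛 p.1 p.2.1 p.2.2))
    (u : ℝ → (Fin r → ℝ) → (Fin m → ℝ))
    (hu : ContDiff ℝ 2 (fun p : ℝ × (Fin r → ℝ) => u p.1 p.2))
    (L : ℝ → (Fin r → ℝ) → (Fin r → ℝ) → ℝ)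
    (hL : ∀ t y w, L t y w =
      𝓛 t (u t y) (deriv (fun s => u s y) t + fderiv ℝ (u t) y w))
    (a b : ℝ) (y : ℝ → Fin r → ℝ)
    (hy : ContDiffOn ℝ 2 y (Set.Ioo a b))
    (x : ℝ → Fin m → ℝ) (hx : ∀ t, x t = u t (y t)) :
    ∀ t ∈ Set.Ioo a b,
      Matrix.vecMul (lagrangianDeriv 𝓛 x t)
          (Matrix.of fun i j => fderiv ℝ (u t) (y t) (Pi.single j 1) i)
        = lagrangianDeriv L y t := by
  intro t₀ ht₀
  set M : ℝ × (Fin m → ℝ) × (Fin m → ℝ) → ℝ := fun p => 𝓛 p.1 p.2.1 p.2.2 with hMdef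
  set F : ℝ × (Fin r → ℝ) → (Fin m → ℝ) := fun p => u p.1 p.2 with hFdef
  have hIoo : Set.Ioo a b ∈ nhds t₀ := isOpen_Ioo.mem_nhds ht₀
  have hMd : Differentiable ℝ M := h𝓛.differentiable (by norm_num)
  have hFd : Differentiable ℝ F := hu.differentiable (by norm_num)
  set Φ₂ : ℝ × (Fin r → ℝ) → (ℝ × (Fin r → ℝ)) →L[ℝ] (Fin m → ℝ) := fderiv ℝ F with hΦ₂def
  have hΦ₂ : ContDiff ℝ 1 Φ₂ := hu.fderiv_right (by norm_num)
  -- injections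
  set ι₃ : (Fin m → ℝ) →L[ℝ] ℝ × (Fin m → ℝ) × (Fin m → ℝ) :=
    (0 : (Fin m → ℝ) →L[ℝ] ℝ).prod ((0 : (Fin m → ℝ) →L[ℝ] (Fin m → ℝ)).prod
      (ContinuousLinearMap.id ℝ _)) with hι₃def
  set ι₂ : (Fin m → ℝ) →L[ℝ] ℝ × (Fin m → ℝ) × (Fin m → ℝ) :=
    (0 : (Fin m → ℝ) →L[ℝ] ℝ).prod ((ContinuousLinearMap.id ℝ _).prod
      (0 : (Fin m → ℝ) →L[ℝ] (Fin m → ℝ))) with hι₂def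
  set ιy : (Fin r → ℝ) →L[ℝ] ℝ × (Fin r → ℝ) :=
    (0 : (Fin r → ℝ) →L[ℝ] ℝ).prod (ContinuousLinearMap.id ℝ _) with hιydef
  set Ψ : (ℝ × (Fin m → ℝ) × (Fin m → ℝ)) → (Fin m → ℝ) →L[ℝ] ℝ :=
    fun p => (fderiv ℝ M p).comp ι₃ with hΨdef
  set Φ : (ℝ × (Fin m → ℝ) × (Fin m → ℝ)) → (Fin m → ℝ) →L[ℝ] ℝ :=
    fun p => (fderiv ℝ M p).comp ι₂ with hΦdef
  -- H1 : v-partial of 𝓛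
  have H1 : ∀ (s : ℝ) (q v : Fin m → ℝ), fderiv ℝ (𝓛 s q) v = Ψ (s, q, v) := by
    intro s q v
    have hin : HasFDerivAt (fun v' : Fin m → ℝ => ((s, q, v') : ℝ × (Fin m → ℝ) × (Fin m → ℝ)))
        ι₃ v :=
      (hasFDerivAt_const s v).prodMk ((hasFDerivAt_const q v).prodMk (hasFDerivAt_id v))
    exact ((by have h' := (hMd (s, q, v)).hasFDerivAt.comp v hin; exact h') :
      HasFDerivAt (𝓛 s q) ((fderiv ℝ M (s, q, v)).comp ι₃) v).fderiv
  -- H2 : x-partial of 𝓛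
  have H2 : ∀ (s : ℝ) (q v : Fin m → ℝ), fderiv ℝ (fun z => 𝓛 s z v) q = Φ (s, q, v) := by
    intro s q v
    have hin : HasFDerivAt (fun q' : Fin m → ℝ => ((s, q', v) : ℝ × (Fin m → ℝ) × (Fin m → ℝ)))
        ι₂ q :=
      (hasFDerivAt_const s q).prodMk ((hasFDerivAt_id q).prodMk (hasFDerivAt_const v q))
    exact ((by have h' := (hMd (s, q, v)).hasFDerivAt.comp q hin; exact h') :
      HasFDerivAt (fun z => 𝓛 s z v) ((fderiv ℝ M (s, q, v)).comp ι₂) q).fderiv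
  -- H3 : time partial of u
  have H3 : ∀ (s : ℝ) (y' : Fin r → ℝ),
      HasDerivAt (fun s' => u s' y') (Φ₂ (s, y') ((1 : ℝ), (0 : Fin r → ℝ))) s := by
    intro s y'
    have hc : HasDerivAt (fun s' : ℝ => ((s', y') : ℝ × (Fin r → ℝ))) (1, 0) s :=
      (hasDerivAt_id s).prodMk (hasDerivAt_const s y')
    exact (hFd (s, y')).hasFDerivAt.comp_hasDerivAt_of_eq s hc rfl
  -- H4 : space partial of u
  have H4 : ∀ (s : ℝ) (y' : Fin r → ℝ), fderiv ℝ (u s) y' = (Φ₂ (s, y')).comp ιy := by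
    intro s y'
    have hin : HasFDerivAt (fun y'' : Fin r → ℝ => ((s, y'') : ℝ × (Fin r → ℝ))) ιy y' :=
      (hasFDerivAt_const s y').prodMk (hasFDerivAt_id y')
    exact (((hFd (s, y')).hasFDerivAt.comp y' hin) :
      HasFDerivAt (u s) ((Φ₂ (s, y')).comp ιy) y').fderiv
  -- H5 : L in terms of M
  have H5 : ∀ (s : ℝ) (y' : Fin r → ℝ) (w : Fin r → ℝ),
      L s y' w = M (s, F (s, y'), Φ₂ (s, y') (1, w)) := by
    intro s y' w
    rw [hL, (H3 s y').deriv, H4 s y']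
    show 𝓛 s (F (s, y')) (Φ₂ (s, y') (1, 0) + Φ₂ (s, y') (ιy w)) = _
    rw [← map_add]
    have : ((1 : ℝ), (0 : Fin r → ℝ)) + ιy w = (1, w) := by
      simp [hιydef, Prod.mk_add_mk]
    rw [this]
  -- curve facts
  set γ : ℝ → ℝ × (Fin r → ℝ) := fun s => (s, y s) with hγdef
  have hxe : x = fun s => F (γ s) := funext fun s => hx s
  have hyd : ∀ s ∈ Set.Ioo a b, HasDerivAt y (deriv y s) s := fun s hs =>
    (((hy.contDiffAt (isOpen_Ioo.mem_nhds hs)).differentiableAt (by norm_num))).hasDerivAt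
  have hγd : ∀ s ∈ Set.Ioo a b, HasDerivAt γ (1, deriv y s) s := fun s hs =>
    (hasDerivAt_id s).prodMk (hyd s hs)
  have hxd : ∀ s ∈ Set.Ioo a b, HasDerivAt x (Φ₂ (γ s) (1, deriv y s)) s := by
    intro s hs
    rw [hxe]
    exact (hFd (γ s)).hasFDerivAt.comp_hasDerivAt_of_eq s (hγd s hs) rfl
  have hderivx : ∀ s ∈ Set.Ioo a b, deriv x s = Φ₂ (γ s) (1, deriv y s) := fun s hs =>
    (hxd s hs).deriv
  set z : ℝ → ℝ × (Fin m → ℝ) × (Fin m → ℝ) := fun s => (s, x s, deriv x s) with hzdef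
  -- smoothness of x and deriv x
  have hγC : ContDiffOn ℝ 2 γ (Set.Ioo a b) := (contDiff_id.contDiffOn).prodMk hy
  have hxC : ContDiffOn ℝ 2 x (Set.Ioo a b) := by
    rw [hxe]; exact hu.comp_contDiffOn hγC
  have hdxC : ContDiffOn ℝ 1 (deriv x) (Set.Ioo a b) :=
    hxC.deriv_of_isOpen isOpen_Ioo (by norm_num)
  have hddx : HasDerivAt (deriv x) (deriv (deriv x) t₀) t₀ :=
    (((hdxC.contDiffAt hIoo)).differentiableAt (by norm_num)).hasDerivAt
  set zd : ℝ × (Fin m → ℝ) × (Fin m → ℝ) :=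
    (1, Φ₂ (γ t₀) (1, deriv y t₀), deriv (deriv x) t₀) with hzddef
  have hzd : HasDerivAt z zd t₀ :=
    (hasDerivAt_id t₀).prodMk ((hxd t₀ ht₀).prodMk hddx)
  -- Ψ is C¹
  have hΨC : ContDiff ℝ 1 Ψ := by
    have h1 : ContDiff ℝ 1 (fderiv ℝ M) := h𝓛.fderiv_right (by norm_num)
    have heq : Ψ = fun p =>
        ((ContinuousLinearMap.compL ℝ (Fin m → ℝ) (ℝ × (Fin m → ℝ) × (Fin m → ℝ)) ℝ).flip ι₃)
          (fderiv ℝ M p) := by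
      funext p
      simp [hΨdef]
    rw [heq]
    exact (ContinuousLinearMap.contDiff _).comp h1
  set Ψ' := fderiv ℝ Ψ (z t₀) with hΨ'def
  have hΨz : HasDerivAt (fun s => Ψ (z s)) (Ψ' zd) t₀ :=
    ((hΨC.differentiable (by norm_num) (z t₀)).hasFDerivAt).comp_hasDerivAt_of_eq t₀ hzd rfl
  -- the 𝓛-side Lagrangian derivative
  have hLag𝓛 : ∀ j, lagrangianDeriv 𝓛 x t₀ j
      = Ψ' zd (Pi.single j 1) - Φ (z t₀) (Pi.single j 1) := by
    intro j
    show deriv (fun s => fderiv ℝ (𝓛 s (x s)) (deriv x s) (Pi.single j 1)) t₀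
        - fderiv ℝ (fun q => 𝓛 t₀ q (deriv x t₀)) (x t₀) (Pi.single j 1) = _
    have e1 : (fun s => fderiv ℝ (𝓛 s (x s)) (deriv x s) (Pi.single j 1))
        = fun s => Ψ (z s) (Pi.single j 1) := by
      funext s; rw [H1]
    rw [e1, H2]
    congr 1
    have h := (hΨz.clm_apply (hasDerivAt_const t₀ (Pi.single j 1))).deriv
    simpa using h
  -- second derivative of F at γ t₀
  have hB : HasFDerivAt Φ₂ (fderiv ℝ Φ₂ (γ t₀)) (γ t₀) :=
    ((hΦ₂.differentiable (by norm_num)) (γ t₀)).hasFDerivAt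
  set B := fderiv ℝ Φ₂ (γ t₀) with hBdef
  set gd : ℝ × (Fin r → ℝ) := (1, deriv y t₀) with hgddef
  have hA : HasDerivAt (fun s => Φ₂ (γ s)) (B gd) t₀ :=
    hB.comp_hasDerivAt_of_eq t₀ (hγd t₀ ht₀) rfl
  have hsym : ∀ v w, B v w = B w v :=
    second_derivative_symmetric (fun p => (hFd p).hasFDerivAt) hB
  -- H6 : the w-partial of L along the curve
  have H6 : ∀ s ∈ Set.Ioo a b,
      fderiv ℝ (L s (y s)) (deriv y s) = (Ψ (z s)).comp ((Φ₂ (γ s)).comp ιy) := by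
    intro s hs
    have hfun : L s (y s) = fun w => M (s, F (γ s), Φ₂ (γ s) (1, 0) + ((Φ₂ (γ s)).comp ιy) w) := by
      funext w
      rw [H5 s (y s) w]
      have : ((1 : ℝ), w) = ((1 : ℝ), (0 : Fin r → ℝ)) + ιy w := by
        simp [hιydef, Prod.mk_add_mk]
      rw [show (Φ₂ (γ s) (1, w)) = Φ₂ (γ s) (1, 0) + ((Φ₂ (γ s)).comp ιy) w by
        rw [this, map_add]; rfl]
    rw [hfun]
    have h1 : HasFDerivAt (fun w : Fin r → ℝ => Φ₂ (γ s) (1, 0) + ((Φ₂ (γ s)).comp ιy) w)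
        ((Φ₂ (γ s)).comp ιy) (deriv y s) :=
      (((Φ₂ (γ s)).comp ιy).hasFDerivAt).const_add (Φ₂ (γ s) (1, 0))
    have hin : HasFDerivAt (fun w : Fin r → ℝ =>
        ((s, F (γ s), Φ₂ (γ s) (1, 0) + ((Φ₂ (γ s)).comp ιy) w) :
          ℝ × (Fin m → ℝ) × (Fin m → ℝ)))
        ((0 : (Fin r → ℝ) →L[ℝ] ℝ).prod
          ((0 : (Fin r → ℝ) →L[ℝ] (Fin m → ℝ)).prod ((Φ₂ (γ s)).comp ιy))) (deriv y s) :=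
      (hasFDerivAt_const s _).prodMk ((hasFDerivAt_const (F (γ s)) _).prodMk h1)
    have hfd : fderiv ℝ (fun w : Fin r → ℝ =>
          M (s, F (γ s), Φ₂ (γ s) (1, 0) + ((Φ₂ (γ s)).comp ιy) w)) (deriv y s)
        = (fderiv ℝ M (s, F (γ s), Φ₂ (γ s) (1, 0) + ((Φ₂ (γ s)).comp ιy) (deriv y s))).comp
          ((0 : (Fin r → ℝ) →L[ℝ] ℝ).prod
            ((0 : (Fin r → ℝ) →L[ℝ] (Fin m → ℝ)).prod ((Φ₂ (γ s)).comp ιy))) :=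
      ((hMd _).hasFDerivAt.comp (deriv y s) hin).fderiv
    rw [hfd]
    have hzs : ((s, F (γ s), Φ₂ (γ s) (1, 0) + ((Φ₂ (γ s)).comp ιy) (deriv y s)) :
        ℝ × (Fin m → ℝ) × (Fin m → ℝ)) = z s := by
      have h2 : Φ₂ (γ s) (1, 0) + ((Φ₂ (γ s)).comp ιy) (deriv y s) = deriv x s := by
        rw [hderivx s hs]
        rw [show ((Φ₂ (γ s)).comp ιy) (deriv y s) = Φ₂ (γ s) (ιy (deriv y s)) from rfl,
          ← map_add]
        exact congrArg _ (by simp [hιydef, Prod.mk_add_mk])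
      rw [h2]
      exact congrArg _ (congrArg₂ Prod.mk (hx s).symm rfl)
    rw [hzs]
    refine ContinuousLinearMap.ext fun w => ?_
    simp [hΨdef, hι₃def]
  -- the first term of the L-side Lagrangian derivative
  have hLagL : ∀ k, lagrangianDeriv L y t₀ k
      = (Ψ' zd ((Φ₂ (γ t₀)) (ιy (Pi.single k 1)))
          + Ψ (z t₀) (B gd (ιy (Pi.single k 1))))
        - (Φ (z t₀) ((Φ₂ (γ t₀)) (ιy (Pi.single k 1)))
          + Ψ (z t₀) (B (ιy (Pi.single k 1)) gd)) := by
    intro k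
    show deriv (fun s => fderiv ℝ (L s (y s)) (deriv y s) (Pi.single k 1)) t₀
        - fderiv ℝ (fun q => L t₀ q (deriv y t₀)) (y t₀) (Pi.single k 1) = _
    congr 1
    · -- the time-derivative term
      have hev : (fun s => fderiv ℝ (L s (y s)) (deriv y s) (Pi.single k 1))
          =ᶠ[nhds t₀] fun s => Ψ (z s) (Φ₂ (γ s) (ιy (Pi.single k 1))) := by
        filter_upwards [hIoo] with s hs
        rw [H6 s hs]
        rfl
      rw [hev.deriv_eq]
      have hc : HasDerivAt (fun s => Φ₂ (γ s) (ιy (Pi.single k 1)))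
          (B gd (ιy (Pi.single k 1))) t₀ := by
        have := hA.clm_apply (hasDerivAt_const t₀ (ιy (Pi.single k 1)))
        simpa using this
      have := hΨz.clm_apply hc
      rw [this.deriv]
    · -- the space-derivative term
      set w := deriv y t₀ with hwdef
      have hfun : (fun q => L t₀ q w)
          = fun q => M (t₀, F (t₀, q), Φ₂ (t₀, q) (1, w)) := by
        funext q
        exact H5 t₀ q w
      rw [hfun]
      -- chain rule in q at y t₀
      have hρ : HasFDerivAt (fun q : Fin r → ℝ => ((t₀, q) : ℝ × (Fin r → ℝ))) ιy (y t₀) :=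
        (hasFDerivAt_const t₀ (y t₀)).prodMk (hasFDerivAt_id (y t₀))
      have h2 : HasFDerivAt (fun q : Fin r → ℝ => F (t₀, q)) ((Φ₂ (γ t₀)).comp ιy) (y t₀) :=
        (hFd (γ t₀)).hasFDerivAt.comp (y t₀) hρ
      have h3p : HasFDerivAt (fun p : ℝ × (Fin r → ℝ) => Φ₂ p (1, w))
          ((Φ₂ (γ t₀)).comp (0 : (ℝ × (Fin r → ℝ)) →L[ℝ] ℝ × (Fin r → ℝ)) + B.flip (1, w))
          (γ t₀) :=
        hB.clm_apply (hasFDerivAt_const (1, w) (γ t₀))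
      have h3 : HasFDerivAt (fun q : Fin r → ℝ => Φ₂ (t₀, q) (1, w))
          (((Φ₂ (γ t₀)).comp (0 : (ℝ × (Fin r → ℝ)) →L[ℝ] ℝ × (Fin r → ℝ))
            + B.flip (1, w)).comp ιy) (y t₀) :=
        h3p.comp (y t₀) hρ
      have hin : HasFDerivAt (fun q : Fin r → ℝ =>
          ((t₀, F (t₀, q), Φ₂ (t₀, q) (1, w)) : ℝ × (Fin m → ℝ) × (Fin m → ℝ)))
          ((0 : (Fin r → ℝ) →L[ℝ] ℝ).prod (((Φ₂ (γ t₀)).comp ιy).prod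
            (((Φ₂ (γ t₀)).comp (0 : (ℝ × (Fin r → ℝ)) →L[ℝ] ℝ × (Fin r → ℝ))
              + B.flip (1, w)).comp ιy))) (y t₀) :=
        (hasFDerivAt_const t₀ (y t₀)).prodMk (h2.prodMk h3)
      have hfd : fderiv ℝ (fun q : Fin r → ℝ => M (t₀, F (t₀, q), Φ₂ (t₀, q) (1, w))) (y t₀)
          = (fderiv ℝ M (t₀, F (t₀, y t₀), Φ₂ (t₀, y t₀) (1, w))).comp
            ((0 : (Fin r → ℝ) →L[ℝ] ℝ).prod (((Φ₂ (γ t₀)).comp ιy).prod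
              (((Φ₂ (γ t₀)).comp (0 : (ℝ × (Fin r → ℝ)) →L[ℝ] ℝ × (Fin r → ℝ))
                + B.flip (1, w)).comp ιy))) :=
        ((hMd _).hasFDerivAt.comp (y t₀) hin).fderiv
      rw [hfd]
      have hzs : ((t₀, F (t₀, y t₀), Φ₂ (t₀, y t₀) (1, w)) :
          ℝ × (Fin m → ℝ) × (Fin m → ℝ)) = z t₀ := by
        have h2' : Φ₂ (t₀, y t₀) (1, w) = deriv x t₀ := (hderivx t₀ ht₀).symm
        rw [h2']
        exact congrArg _ (congrArg₂ Prod.mk (hx t₀).symm rfl)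
      rw [hzs, ContinuousLinearMap.comp_apply]
      have hsplit : ∀ (q v : Fin m → ℝ),
          fderiv ℝ M (z t₀) ((0 : ℝ), q, v) = Φ (z t₀) q + Ψ (z t₀) v := by
        intro q v
        have : ((0 : ℝ), q, v) = ι₂ q + ι₃ v := by
          simp [hι₂def, hι₃def, Prod.mk_add_mk]
        rw [this, map_add]
        rfl
      rw [show ((0 : (Fin r → ℝ) →L[ℝ] ℝ).prod (((Φ₂ (γ t₀)).comp ιy).prod
            (((Φ₂ (γ t₀)).comp (0 : (ℝ × (Fin r → ℝ)) →L[ℝ] ℝ × (Fin r → ℝ))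
              + B.flip (1, w)).comp ιy))) (Pi.single k 1)
          = ((0 : ℝ), Φ₂ (γ t₀) (ιy (Pi.single k 1)), B (ιy (Pi.single k 1)) (1, w)) by
        simp]
      rw [hsplit]
  -- final assembly
  funext k
  have hgoal1 : Matrix.vecMul (lagrangianDeriv 𝓛 x t₀)
      (Matrix.of fun i j => fderiv ℝ (u t₀) (y t₀) (Pi.single j 1) i) k
      = ∑ i, lagrangianDeriv 𝓛 x t₀ i * (Φ₂ (γ t₀) (ιy (Pi.single k 1))) i := by
    rw [Matrix.vecMul, dotProduct]
    refine Finset.sum_congr rfl fun i _ => ?_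
    rw [Matrix.of_apply, H4 t₀ (y t₀)]
    rfl
  rw [hgoal1, hLagL k]
  have hswap : B gd (ιy (Pi.single k 1)) = B (ιy (Pi.single k 1)) gd := hsym _ _
  rw [hswap]
  ring_nf
  calc ∑ i, lagrangianDeriv 𝓛 x t₀ i * (Φ₂ (γ t₀) (ιy (Pi.single k 1))) i
      = ∑ i, (Ψ' zd (Pi.single i 1) - Φ (z t₀) (Pi.single i 1))
          * (Φ₂ (γ t₀) (ιy (Pi.single k 1))) i := by
        refine Finset.sum_congr rfl fun i _ => ?_
        rw [hLag𝓛 i]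
    _ = ∑ i, Ψ' zd (Pi.single i 1) * (Φ₂ (γ t₀) (ιy (Pi.single k 1))) i
          - ∑ i, Φ (z t₀) (Pi.single i 1) * (Φ₂ (γ t₀) (ιy (Pi.single k 1))) i := by
        rw [← Finset.sum_sub_distrib]
        refine Finset.sum_congr rfl fun i _ => ?_
        ring
    _ = Ψ' zd (Φ₂ (γ t₀) (ιy (Pi.single k 1))) - Φ (z t₀) (Φ₂ (γ t₀) (ιy (Pi.single k 1))) := by
        rw [clm_sum_single, clm_sum_single]
    _ = _ := by ring_nf
end

section
/- Let G be an m×m real symmetric positive definite matrix, Φ an n×m real matrix with rank Φ = n (n < m), and C an n×n invertible real matrix. Then for every v ∈ ℝ^n, (CΦ)ᵀ ((CΦ) G⁻¹ (CΦ)ᵀ)⁻¹ (C v) = Φᵀ (Φ G⁻¹ Φᵀ)⁻¹ v. Consequently, the reaction force N = −Φᵀ (Φ G⁻¹ Φᵀ)⁻¹ (c + Φ G⁻¹ f) is unchanged when the constraint data (Φ, c, f-term) are multiplied on the left by an invertible matrix C, i.e., the reactions of ideal constraints do not depend on the choice of functions defining the constraint manifold. -/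
open Matrix

private lemma transpose_mulVec_injective {m n : ℕ} (Φ : Matrix (Fin n) (Fin m) ℝ)
    (hΦ : Φ.rank = n) : Function.Injective Φᵀ.mulVec := by
  have hrt : Φᵀ.rank = n := by rw [Matrix.rank_transpose, hΦ]
  have hker : LinearMap.ker Φᵀ.mulVecLin = ⊥ := by
    have h := Φᵀ.mulVecLin.finrank_range_add_finrank_ker
    rw [show Module.finrank ℝ (Fin n → ℝ) = n by simp] at h
    have : Module.finrank ℝ (LinearMap.range Φᵀ.mulVecLin) = n := hrt
    have hk0 : Module.finrank ℝ (LinearMap.ker Φᵀ.mulVecLin) = 0 := by omega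
    exact Submodule.finrank_eq_zero.mp hk0
  intro x y hxy
  have := LinearMap.ker_eq_bot.mp hker
  exact this hxy

private lemma posdef_phi_ginv_phit {m n : ℕ}
    (G : Matrix (Fin m) (Fin m) ℝ) (hGpd : G.PosDef)
    (Φ : Matrix (Fin n) (Fin m) ℝ) (hΦ : Φ.rank = n) :
    (Φ * G⁻¹ * Φᵀ).PosDef := by
  have hGinv : G⁻¹.PosDef := hGpd.inv
  have hsemi : (Φ * G⁻¹ * Φᴴ).PosSemidef := hGinv.posSemidef.mul_mul_conjTranspose_same Φ
  have hH : Φᴴ = Φᵀ := by ext i j; simp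
  rw [hH] at hsemi
  refine Matrix.PosDef.of_dotProduct_mulVec_pos hsemi.isHermitian (fun x hx => ?_)
  have hΦx : Φᵀ *ᵥ x ≠ 0 := by
    intro h
    apply hx
    have := transpose_mulVec_injective Φ hΦ (a₁ := x) (a₂ := 0)
    simpa [h] using this
  have := hGinv.dotProduct_mulVec_pos hΦx
  have heq : star x ⬝ᵥ ((Φ * G⁻¹ * Φᵀ) *ᵥ x) = star (Φᵀ *ᵥ x) ⬝ᵥ (G⁻¹ *ᵥ (Φᵀ *ᵥ x)) := by
    simp only [star_trivial, ← Matrix.mulVec_mulVec]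
    rw [Matrix.dotProduct_mulVec x Φ, ← Matrix.mulVec_transpose]
  rw [heq]; exact this

/-- Invariance of the reaction force of ideal constraints under a change of
the functions defining the constraint manifold: multiplying the constraint
data on the left by an invertible matrix `C` does not change
`Φᵀ (Φ G⁻¹ Φᵀ)⁻¹` applied to the correspondingly transformed vector, hence
does not change the reaction force `N = -Φᵀ (Φ G⁻¹ Φᵀ)⁻¹ (c + Φ G⁻¹ f)`. -/
theorem reaction_force_independent_of_constraint_functions {m n : ℕ} (hnm : n < m)
    (G : Matrix (Fin m) (Fin m) ℝ) (hGsymm : G.IsSymm) (hGpd : G.PosDef)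
    (Φ : Matrix (Fin n) (Fin m) ℝ) (hΦ : Φ.rank = n)
    (C : Matrix (Fin n) (Fin n) ℝ) (hC : IsUnit C.det) :
    (∀ v : Fin n → ℝ,
      (C * Φ)ᵀ.mulVec (((C * Φ) * G⁻¹ * (C * Φ)ᵀ)⁻¹.mulVec (C.mulVec v)) =
        Φᵀ.mulVec ((Φ * G⁻¹ * Φᵀ)⁻¹.mulVec v)) ∧
    (∀ (c : Fin n → ℝ) (f : Fin m → ℝ),
      -((C * Φ)ᵀ.mulVec (((C * Φ) * G⁻¹ * (C * Φ)ᵀ)⁻¹.mulVec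
          (C.mulVec c + (C * Φ).mulVec (G⁻¹.mulVec f)))) =
        -(Φᵀ.mulVec ((Φ * G⁻¹ * Φᵀ)⁻¹.mulVec (c + Φ.mulVec (G⁻¹.mulVec f))))) := by
  set H := Φ * G⁻¹ * Φᵀ with hHdef
  have hHpd : H.PosDef := posdef_phi_ginv_phit G hGpd Φ hΦ
  have hHu : IsUnit H.det := isUnit_iff_ne_zero.mpr hHpd.det_pos.ne'
  have hCt : IsUnit Cᵀ.det := by rwa [Matrix.det_transpose]
  -- key matrix identity
  have hCH : (C * Φ) * G⁻¹ * (C * Φ)ᵀ = C * H * Cᵀ := by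
    rw [Matrix.transpose_mul, hHdef]
    simp only [Matrix.mul_assoc]
  have hinv : ((C * Φ) * G⁻¹ * (C * Φ)ᵀ)⁻¹ = Cᵀ⁻¹ * H⁻¹ * C⁻¹ := by
    rw [hCH, Matrix.mul_inv_rev, Matrix.mul_inv_rev]
    simp only [Matrix.mul_assoc]
  have key : ∀ v : Fin n → ℝ,
      (C * Φ)ᵀ.mulVec (((C * Φ) * G⁻¹ * (C * Φ)ᵀ)⁻¹.mulVec (C.mulVec v)) =
        Φᵀ.mulVec (H⁻¹.mulVec v) := by
    intro v
    have hmat : (C * Φ)ᵀ * ((C * Φ) * G⁻¹ * (C * Φ)ᵀ)⁻¹ * C = Φᵀ * H⁻¹ := by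
      rw [hinv, Matrix.transpose_mul]
      have e1 : Φᵀ * Cᵀ * (Cᵀ⁻¹ * H⁻¹ * C⁻¹) * C
          = Φᵀ * (Cᵀ * Cᵀ⁻¹) * H⁻¹ * (C⁻¹ * C) := by simp only [Matrix.mul_assoc]
      rw [e1, Matrix.mul_nonsing_inv _ hCt, Matrix.nonsing_inv_mul _ hC,
        Matrix.mul_one, Matrix.mul_one]
    simp only [Matrix.mulVec_mulVec]
    rw [← Matrix.mul_assoc, hmat]
  refine ⟨key, fun c f => ?_⟩
  have hcv : C.mulVec c + (C * Φ).mulVec (G⁻¹.mulVec f)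
      = C.mulVec (c + Φ.mulVec (G⁻¹.mulVec f)) := by
    simp [Matrix.mulVec_add, Matrix.mulVec_mulVec, Matrix.mul_assoc]
  rw [hcv, key]
end

section
/- Let G be an m×m real symmetric positive definite matrix, Φ and S two n×m real matrices with Φ G⁻¹ Sᵀ invertible, v ∈ ℝ^m and c ∈ ℝ^n. Then there exists a unique vector N ∈ ℝ^m such that (i) ⟨N, ξ⟩ = 0 for every ξ ∈ ℝ^m with S ξ = 0, and (ii) c + Φ G⁻¹ (v + N) = 0. Moreover, this N is given explicitly by N = −Sᵀ (Φ G⁻¹ Sᵀ)⁻¹ (c + Φ G⁻¹ v). -/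
/-!
Since `Φ G⁻¹ Sᵀ` is invertible, `P := Sᵀ (Φ G⁻¹ Sᵀ)⁻¹ Φ G⁻¹` satisfies `S Pᵀ = S`, so `x - Pᵀ x ∈ ker S`
for every `x`. A force `N` orthogonal to `ker S` therefore satisfies `N = P N`, i.e.
`N = Sᵀ (Φ G⁻¹ Sᵀ)⁻¹ (Φ G⁻¹ N)`, and the constraint equation prescribes `Φ G⁻¹ N = -(c + Φ G⁻¹ v)`.
Conversely every `Sᵀ μ` is orthogonal to `ker S`.
-/

open Matrix

namespace Matrix

variable {m n K : Type*} [Fintype m] [Fintype n] [CommRing K]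

theorem transpose_mulVec_dotProduct_eq_zero {S : Matrix n m K} (y : n → K) {ξ : m → K}
    (hξ : S *ᵥ ξ = 0) : Sᵀ *ᵥ y ⬝ᵥ ξ = 0 := by
  rw [dotProduct_comm, dotProduct_transpose_mulVec, hξ, dotProduct_zero]

variable [DecidableEq n]

theorem mul_transpose_mul_nonsing_inv_mul {S M : Matrix n m K} (hA : IsUnit (M * Sᵀ).det) :
    S * (Sᵀ * (M * Sᵀ)⁻¹ * M)ᵀ = S := by
  have h : Sᵀ * (M * Sᵀ)⁻¹ * M * Sᵀ = Sᵀ := by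
    rw [Matrix.mul_assoc, Matrix.mul_assoc, nonsing_inv_mul _ hA, Matrix.mul_one]
  simpa using congrArg transpose h

theorem eq_transpose_mulVec_of_orthogonal_ker {S M : Matrix n m K} (hA : IsUnit (M * Sᵀ).det)
    {N : m → K} (hN : ∀ ξ, S *ᵥ ξ = 0 → N ⬝ᵥ ξ = 0) :
    N = Sᵀ *ᵥ ((M * Sᵀ)⁻¹ *ᵥ (M *ᵥ N)) := by
  set P := Sᵀ * (M * Sᵀ)⁻¹ * M
  have hker : ∀ x, S *ᵥ (x - Pᵀ *ᵥ x) = 0 := fun x => by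
    rw [mulVec_sub, mulVec_mulVec, mul_transpose_mul_nonsing_inv_mul hA, sub_self]
  have hfix : N = P *ᵥ N := dotProduct_eq _ _ fun x => by
    have := hN _ (hker x)
    rw [dotProduct_sub, dotProduct_comm N, dotProduct_transpose_mulVec, sub_eq_zero] at this
    rw [dotProduct_comm, this, dotProduct_comm]
  simpa only [P, ← mulVec_mulVec] using hfix

theorem orthogonal_ker_and_mulVec_eq_iff {S M : Matrix n m K} (hA : IsUnit (M * Sᵀ).det)
    (N : m → K) (b : n → K) :
    ((∀ ξ, S *ᵥ ξ = 0 → N ⬝ᵥ ξ = 0) ∧ M *ᵥ N = b) ↔ N = Sᵀ *ᵥ ((M * Sᵀ)⁻¹ *ᵥ b) := by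
  constructor
  · rintro ⟨hN, rfl⟩
    exact eq_transpose_mulVec_of_orthogonal_ker hA hN
  · rintro rfl
    refine ⟨fun ξ hξ => transpose_mulVec_dotProduct_eq_zero _ hξ, ?_⟩
    rw [mulVec_mulVec, mulVec_mulVec, mul_nonsing_inv _ hA, one_mulVec]

end Matrix

theorem release_from_constraints_general_general {m n : ℕ}
    (G : Matrix (Fin m) (Fin m) ℝ)
    (Φ S : Matrix (Fin n) (Fin m) ℝ) (hinv : IsUnit (Φ * G⁻¹ * Sᵀ).det)
    (v : Fin m → ℝ) (c : Fin n → ℝ) :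
    (∃! N : Fin m → ℝ,
        (∀ ξ : Fin m → ℝ, S.mulVec ξ = 0 → N ⬝ᵥ ξ = 0) ∧
        c + Φ.mulVec (G⁻¹.mulVec (v + N)) = 0) ∧
    (∀ N : Fin m → ℝ,
        ((∀ ξ : Fin m → ℝ, S.mulVec ξ = 0 → N ⬝ᵥ ξ = 0) ∧
            c + Φ.mulVec (G⁻¹.mulVec (v + N)) = 0) →
        N = -(Sᵀ.mulVec ((Φ * G⁻¹ * Sᵀ)⁻¹.mulVec (c + Φ.mulVec (G⁻¹.mulVec v))))) := by
  set w := c + Φ *ᵥ (G⁻¹ *ᵥ v)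
  have hconstraint : ∀ N, c + Φ *ᵥ (G⁻¹ *ᵥ (v + N)) = 0 ↔ (Φ * G⁻¹) *ᵥ N = -w := fun N => by
    rw [mulVec_add, mulVec_add, ← add_assoc, ← mulVec_mulVec, eq_neg_iff_add_eq_zero, add_comm]
  have hsol : ∀ N, ((∀ ξ, S *ᵥ ξ = 0 → N ⬝ᵥ ξ = 0) ∧ c + Φ *ᵥ (G⁻¹ *ᵥ (v + N)) = 0) ↔
      N = -(Sᵀ *ᵥ ((Φ * G⁻¹ * Sᵀ)⁻¹ *ᵥ w)) := fun N => by
    rw [hconstraint, orthogonal_ker_and_mulVec_eq_iff hinv, mulVec_neg, mulVec_neg]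
  simp only [hsol]
  exact ⟨existsUnique_eq, fun _ => id⟩

/-- Generalized principle of release from constraints: with virtual
displacements redefined as `ker S`, where `Φ G⁻¹ Sᵀ` is invertible, there is a
unique reaction force `N` with `⟨N, ξ⟩ = 0` for all `ξ ∈ ker S` and
`c + Φ G⁻¹ (v + N) = 0`, namely `N = -Sᵀ (Φ G⁻¹ Sᵀ)⁻¹ (c + Φ G⁻¹ v)`. -/
theorem release_from_constraints_general {m n : ℕ}
    (G : Matrix (Fin m) (Fin m) ℝ) (hGsymm : G.IsSymm) (hGpd : G.PosDef)
    (Φ S : Matrix (Fin n) (Fin m) ℝ) (hinv : IsUnit (Φ * G⁻¹ * Sᵀ).det)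
    (v : Fin m → ℝ) (c : Fin n → ℝ) :
    (∃! N : Fin m → ℝ,
        (∀ ξ : Fin m → ℝ, S.mulVec ξ = 0 → N ⬝ᵥ ξ = 0) ∧
        c + Φ.mulVec (G⁻¹.mulVec (v + N)) = 0) ∧
    (∀ N : Fin m → ℝ,
        ((∀ ξ : Fin m → ℝ, S.mulVec ξ = 0 → N ⬝ᵥ ξ = 0) ∧
            c + Φ.mulVec (G⁻¹.mulVec (v + N)) = 0) →
        N = -(Sᵀ.mulVec ((Φ * G⁻¹ * Sᵀ)⁻¹.mulVec (c + Φ.mulVec (G⁻¹.mulVec v))))) :=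
  release_from_constraints_general_general G Φ S hinv v c
end

section
/- Let I ⊆ ℝ be an open interval, Y ⊆ ℝ^r open, and u : ℝ × Y → ℝ^m a C¹ map such that for every (t, y) the Jacobian u_y(t, y) (an m×r matrix) has rank r and u(t, ·) : Y → ℝ^m is injective. Let x : I → ℝ^m be a C¹ curve and y : I → Y a continuous function with u(t, y(t)) = x(t) for all t ∈ I. Then y is continuously differentiable on I; more generally, if u and x are C^k (k ≥ 1) then y is C^k. -/
open Matrix

/-- Smoothness of the lift of a curve to the configuration manifold: if
`u(t, ·)` is injective on the open set `Y` with full-rank Jacobian `u_y`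
(rank `r`), `u` and the curve `x` are `C^k` (`k ≥ 1`), and `y` is a
continuous function with `u(t, y(t)) = x(t)` on `I`, then `y` is `C^k`
on `I`. -/
theorem lift_is_smooth {m r : ℕ} (k : ℕ) (hk : 1 ≤ k)
    (a b : ℝ) (Y : Set (Fin r → ℝ)) (hY : IsOpen Y)
    (u : ℝ → (Fin r → ℝ) → (Fin m → ℝ))
    (hu : ContDiff ℝ k (fun p : ℝ × (Fin r → ℝ) => u p.1 p.2))
    (hrank : ∀ t : ℝ, ∀ y ∈ Y,
      (Matrix.of fun i j => fderiv ℝ (u t) y (Pi.single j 1) i : Matrix (Fin m) (Fin r) ℝ).rank = r)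
    (hinj : ∀ t : ℝ, Set.InjOn (u t) Y)
    (x : ℝ → Fin m → ℝ) (hx : ContDiffOn ℝ k x (Set.Ioo a b))
    (y : ℝ → Fin r → ℝ)
    (hyc : ContinuousOn y (Set.Ioo a b))
    (hyY : ∀ t ∈ Set.Ioo a b, y t ∈ Y)
    (hxy : ∀ t ∈ Set.Ioo a b, u t (y t) = x t) :
    ContDiffOn ℝ k y (Set.Ioo a b) := by
  have hk' : (1 : ℕ∞) ≤ (k : ℕ∞) := by exact_mod_cast hk
  have hk2 : ((k : ℕ) : WithTop ℕ∞) ≠ 0 := by exact_mod_cast (show k ≠ 0 by omega)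
  intro t₀ ht₀
  apply ContDiffAt.contDiffWithinAt
  set y₀ := y t₀ with hy₀
  have hy₀Y : y₀ ∈ Y := hyY t₀ ht₀
  set p₀ : ℝ × (Fin r → ℝ) := (t₀, y₀) with hp₀
  set U : ℝ × (Fin r → ℝ) → (Fin m → ℝ) := fun p => u p.1 p.2 with hUdef
  have hUd : DifferentiableAt ℝ U p₀ := hu.contDiffAt.differentiableAt (by exact_mod_cast (show k ≠ 0 by omega))
  set D := fderiv ℝ U p₀ with hDdef
  have hDU : HasFDerivAt U D p₀ := hUd.hasFDerivAt
  -- The partial derivative in `y`.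
  set A := D.comp (ContinuousLinearMap.inr ℝ ℝ (Fin r → ℝ)) with hAdef
  have hA : HasFDerivAt (u t₀) A y₀ := by
    have h1 : HasFDerivAt (fun z : Fin r → ℝ => ((t₀ : ℝ), z))
        (ContinuousLinearMap.inr ℝ ℝ (Fin r → ℝ)) y₀ :=
      HasFDerivAt.prodMk (hasFDerivAt_const t₀ y₀) (hasFDerivAt_id y₀)
    have := hDU.comp y₀ h1
    simpa [hUdef] using this
  have hAeq : fderiv ℝ (u t₀) y₀ = A := hA.fderiv
  -- `A` is injective.
  have hAker : LinearMap.ker (A : (Fin r → ℝ) →ₗ[ℝ] (Fin m → ℝ)) = ⊥ := by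
    have hr := hrank t₀ y₀ hy₀Y
    rw [hAeq] at hr
    have hM : (Matrix.of fun i j => A (Pi.single j 1) i : Matrix (Fin m) (Fin r) ℝ)
        = LinearMap.toMatrix' (A : (Fin r → ℝ) →ₗ[ℝ] (Fin m → ℝ)) := by
      ext i j
      have hps : (Pi.single j 1 : Fin r → ℝ) = fun j' => if j' = j then 1 else 0 := by
        ext j'
        simp [Pi.single_apply]
      simp only [LinearMap.toMatrix'_apply, Matrix.of_apply, ContinuousLinearMap.coe_coe, hps]
    rw [hM] at hr
    have hrank_eq : (LinearMap.toMatrix'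
        (A : (Fin r → ℝ) →ₗ[ℝ] (Fin m → ℝ))).rank
        = Module.finrank ℝ (LinearMap.range (A : (Fin r → ℝ) →ₗ[ℝ] (Fin m → ℝ))) := by
      rw [Matrix.rank, ← Matrix.toLin'_apply', Matrix.toLin'_toMatrix']
    rw [hrank_eq] at hr
    have hrn := LinearMap.finrank_range_add_finrank_ker
      (A : (Fin r → ℝ) →ₗ[ℝ] (Fin m → ℝ))
    rw [hr] at hrn
    have hfr : Module.finrank ℝ (Fin r → ℝ) = r := by simp
    rw [hfr] at hrn
    have hker0 : Module.finrank ℝ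
        (LinearMap.ker (A : (Fin r → ℝ) →ₗ[ℝ] (Fin m → ℝ))) = 0 := by omega
    exact Submodule.finrank_eq_zero.mp hker0
  obtain ⟨g, hg⟩ := LinearMap.exists_leftInverse_of_injective
    (A : (Fin r → ℝ) →ₗ[ℝ] (Fin m → ℝ)) hAker
  set G := LinearMap.toContinuousLinearMap g with hGdef
  have hGA : ∀ z : Fin r → ℝ, G (A z) = z := by
    intro z
    have := LinearMap.ext_iff.mp hg z
    simpa [hGdef] using this
  set v : Fin r → ℝ := G (D (1, 0)) with hvdef
  -- The derivative of `F` as a linear equivalence.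
  set Llin : (ℝ × (Fin r → ℝ)) ≃ₗ[ℝ] (ℝ × (Fin r → ℝ)) :=
    { toFun := fun p => (p.1, p.2 + p.1 • v)
      invFun := fun p => (p.1, p.2 - p.1 • v)
      map_add' := by
        intro p q
        refine Prod.ext rfl ?_
        simp [add_smul]
        abel
      map_smul' := by
        intro c p
        refine Prod.ext rfl ?_
        simp [smul_smul, smul_add]
      left_inv := by
        intro p
        refine Prod.ext rfl ?_
        simp
      right_inv := by
        intro p
        refine Prod.ext rfl ?_
        simp } with hLlin
  set L := Llin.toContinuousLinearEquiv with hLdef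
  set F : ℝ × (Fin r → ℝ) → ℝ × (Fin r → ℝ) := fun p => (p.1, G (U p)) with hFdef
  have hLcoe : (L : (ℝ × (Fin r → ℝ)) →L[ℝ] (ℝ × (Fin r → ℝ)))
      = (ContinuousLinearMap.fst ℝ ℝ (Fin r → ℝ)).prod (G.comp D) := by
    apply ContinuousLinearMap.ext
    intro p
    refine Prod.ext rfl ?_
    show p.2 + p.1 • v = G (D p)
    have hp : p = p.1 • ((1 : ℝ), (0 : Fin r → ℝ)) + ((0 : ℝ), p.2) := by
      refine Prod.ext ?_ ?_ <;> simp
    have hApz : A p.2 = D ((0 : ℝ), p.2) := rfl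
    have : G (D p) = p.1 • v + p.2 := by
      conv_lhs => rw [hp]
      rw [map_add, _root_.map_smul, map_add, _root_.map_smul, ← hApz, hGA]
    rw [this, add_comm]
  have hF' : HasFDerivAt F (L : (ℝ × (Fin r → ℝ)) →L[ℝ] (ℝ × (Fin r → ℝ))) p₀ := by
    rw [hLcoe]
    exact HasFDerivAt.prodMk hasFDerivAt_fst (G.hasFDerivAt.comp p₀ hDU)
  have hFc : ContDiffAt ℝ k F p₀ :=
    ContDiffAt.prodMk (contDiff_fst.contDiffAt) ((G.contDiff.comp hu).contDiffAt)
  set ph := hFc.toOpenPartialHomeomorph F hF' hk2 with hph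
  have hsrc : p₀ ∈ ph.source := hFc.mem_toOpenPartialHomeomorph_source hF' hk2
  have hmem : ph.source ∈ nhds p₀ := ph.open_source.mem_nhds hsrc
  have hinvsmooth : ContDiffAt ℝ k (hFc.localInverse hF' hk2) (F p₀) :=
    hFc.to_localInverse hF' hk2
  have hloc : hFc.localInverse hF' hk2 = ⇑ph.symm := rfl
  have hFp₀ : F p₀ = (t₀, G (x t₀)) := by
    simp only [hFdef, hUdef, hp₀]
    rw [hxy t₀ ht₀]
  have hxct : ContDiffAt ℝ k x t₀ := hx.contDiffAt (isOpen_Ioo.mem_nhds ht₀)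
  have hw : ContDiffAt ℝ k (fun t : ℝ => ((t : ℝ), G (x t))) t₀ :=
    ContDiffAt.prodMk contDiffAt_id (G.contDiff.contDiffAt.comp t₀ hxct)
  have hψ : ContDiffAt ℝ k (fun t : ℝ => (ph.symm ((t : ℝ), G (x t))).2) t₀ := by
    have h1 : ContDiffAt ℝ k (⇑ph.symm) ((t₀ : ℝ), G (x t₀)) := by
      rw [← hFp₀, ← hloc]
      exact hinvsmooth
    exact (contDiff_snd.contDiffAt).comp t₀ (h1.comp t₀ hw)
  refine hψ.congr_of_eventuallyEq ?_
  have hyct : ContinuousAt (fun t : ℝ => ((t : ℝ), y t)) t₀ :=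
    continuousAt_id.prodMk (hyc.continuousAt (isOpen_Ioo.mem_nhds ht₀))
  have hev1 : ∀ᶠ t in nhds t₀, ((t : ℝ), y t) ∈ ph.source := by
    exact hyct.preimage_mem_nhds hmem
  have hev2 : ∀ᶠ t in nhds t₀, t ∈ Set.Ioo a b := isOpen_Ioo.eventually_mem ht₀
  filter_upwards [hev1, hev2] with t h1 h2
  have hphcoe : ⇑ph = F := hFc.toOpenPartialHomeomorph_coe hF' hk2
  have hpht : ph (t, y t) = (t, G (x t)) := by
    rw [hphcoe]
    simp only [hFdef, hUdef]
    rw [hxy t h2]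
  calc y t = ((t, y t) : ℝ × (Fin r → ℝ)).2 := rfl
    _ = (ph.symm (ph (t, y t))).2 := by rw [ph.left_inv h1]
    _ = (ph.symm (t, G (x t))).2 := by rw [hpht]
end

section
/- Let I ⊆ ℝ be an open interval, D ⊆ ℝ^m open, Y ⊆ ℝ^r open with r = m − n (n < m), G an m×m real symmetric positive definite matrix, and f : I × D × ℝ^m → ℝ^m continuous. Let g : ℝ × ℝ^m → ℝ^n be C² with rank g_x(t,x) = n whenever g(t,x) = 0, and let u : ℝ × Y → D be C² with g(t, u(t,y)) = 0 and rank u_y(t,y) = r for all (t,y) ∈ ℝ × Y. Define 𝓛(t,x,v) = ½ vᵀ G v, L(t,y,w) = 𝓛(t, u(t,y), u_t(t,y) + u_y(t,y) w) and the generalized force Q(t,y,w) = f(t, u(t,y), u_t(t,y) + u_y(t,y) w)ᵀ u_y(t,y) (a row vector in ℝ^r). If a twice continuously differentiable curve y : I → Y satisfies the Lagrange equations of the second kind [L](t) = Q(t, y(t), ẏ(t)) for all t ∈ I, then the curve x(t) = u(t, y(t)) satisfies G ẍ(t) = f(t, x(t), ẋ(t)) + N(t, x(t), ẋ(t)) for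 all t ∈ I, where N(t,x,v) = −φ_vᵀ (φ_v G⁻¹ φ_vᵀ)⁻¹ (φ_t + φ_x v + φ_v G⁻¹ f)(t,x,v) with φ(t,x,v) = g_t(t,x) + g_x(t,x) v. -/
open Matrix

lemma dot_transpose_mulVec {m n : ℕ} (A : Matrix (Fin n) (Fin m) ℝ) (lam : Fin n → ℝ)
    (v : Fin m → ℝ) : (Aᵀ.mulVec lam) ⬝ᵥ v = lam ⬝ᵥ A.mulVec v := by
  rw [Matrix.mulVec_transpose, ← Matrix.dotProduct_mulVec]

lemma dot_mulVec_left {m n : ℕ} (A : Matrix (Fin n) (Fin m) ℝ) (q : Fin n → ℝ)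
    (w : Fin m → ℝ) : q ⬝ᵥ A.mulVec w = (Aᵀ.mulVec q) ⬝ᵥ w := by
  rw [Matrix.dotProduct_mulVec, ← Matrix.mulVec_transpose]

lemma rank_eq_n_ker_transpose_eq_bot {m n : ℕ} (A : Matrix (Fin n) (Fin m) ℝ)
    (hA : A.rank = n) : LinearMap.ker Aᵀ.mulVecLin = ⊥ := by
  have h1 : Aᵀ.rank = n := by rw [Matrix.rank_transpose]; exact hA
  have h2 := LinearMap.finrank_range_add_finrank_ker (Aᵀ.mulVecLin)
  rw [Matrix.rank] at h1
  simp only [Module.finrank_fin_fun] at h2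
  have : Module.finrank ℝ (LinearMap.ker Aᵀ.mulVecLin) = 0 := by omega
  exact Submodule.finrank_eq_zero.mp this

lemma key_linalg {m n r : ℕ} (hnr : n + r = m) (Gi : Matrix (Fin m) (Fin m) ℝ)
    (hGi : Gi.PosDef)
    (A : Matrix (Fin n) (Fin m) ℝ) (hA : A.rank = n)
    (B : Matrix (Fin m) (Fin r) ℝ) (hB : B.rank = r)
    (hAB : ∀ w, A.mulVec (B.mulVec w) = 0)
    (z : Fin m → ℝ) (hz : ∀ w, z ⬝ᵥ B.mulVec w = 0) :
    Aᵀ.mulVec ((A * Gi * Aᵀ)⁻¹.mulVec (A.mulVec (Gi.mulVec z))) = z := by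
  classical
  obtain ⟨lam, hlam⟩ : ∃ lam, Aᵀ.mulVec lam = z := by
    set W := LinearMap.range Aᵀ.mulVecLin with hWdef
    set R := LinearMap.range B.mulVecLin with hRdef
    have hWR : W ⊓ R = ⊥ := by
      rw [Submodule.eq_bot_iff]
      rintro v ⟨⟨lam, hl⟩, ⟨mu, hm⟩⟩
      simp only [Matrix.mulVecLin_apply] at hl hm
      have hvv : v ⬝ᵥ v = 0 := by
        calc v ⬝ᵥ v = (Aᵀ.mulVec lam) ⬝ᵥ (B.mulVec mu) := by rw [hl, hm]
        _ = lam ⬝ᵥ A.mulVec (B.mulVec mu) := dot_transpose_mulVec ..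
        _ = 0 := by rw [hAB, dotProduct_zero]
      exact dotProduct_self_eq_zero.mp hvv
    have hdim : Module.finrank ℝ W + Module.finrank ℝ R = m := by
      have h1 : Module.finrank ℝ W = n := by
        have := Matrix.rank_transpose (R := ℝ) A; rw [hA] at this
        simpa [Matrix.rank, hWdef] using this
      have h2 : Module.finrank ℝ R = r := by simpa [Matrix.rank, hRdef] using hB
      omega
    have htop : W ⊔ R = ⊤ := by
      apply Submodule.eq_top_of_finrank_eq
      have h3 := Submodule.finrank_sup_add_finrank_inf_eq W R
      rw [hWR] at h3
      simp only [finrank_bot, add_zero] at h3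
      rw [h3, hdim, Module.finrank_fin_fun]
    have hzmem : z ∈ W ⊔ R := htop ▸ Submodule.mem_top
    rw [Submodule.mem_sup] at hzmem
    obtain ⟨w, hw, ρ, hρ, hsum⟩ := hzmem
    obtain ⟨lam, hl⟩ := hw
    obtain ⟨mu, hm⟩ := hρ
    simp only [Matrix.mulVecLin_apply] at hl hm
    have hρ0 : ρ = 0 := by
      have h1 : z ⬝ᵥ ρ = 0 := by rw [← hm]; exact hz mu
      have h2 : w ⬝ᵥ ρ = 0 := by
        rw [← hl, ← hm, dot_transpose_mulVec, hAB, dotProduct_zero]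
      have h3 : ρ ⬝ᵥ ρ = 0 := by
        have h4 := congrArg (fun v => v ⬝ᵥ ρ) hsum
        simp only [add_dotProduct] at h4
        rw [h2, h1, zero_add] at h4; exact h4
      exact dotProduct_self_eq_zero.mp h3
    exact ⟨lam, by rw [hl, ← hsum, hρ0, add_zero]⟩
  set S := A * Gi * Aᵀ with hS
  have hkerAt := rank_eq_n_ker_transpose_eq_bot A hA
  have hSinj : Function.Injective S.mulVec := by
    have key : ∀ q, S.mulVec q = 0 → q = 0 := by
      intro q hq
      have h1 : q ⬝ᵥ S.mulVec q = 0 := by rw [hq, dotProduct_zero]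
      have h2 : q ⬝ᵥ S.mulVec q = (Aᵀ.mulVec q) ⬝ᵥ Gi.mulVec (Aᵀ.mulVec q) := by
        rw [hS, ← Matrix.mulVec_mulVec, ← Matrix.mulVec_mulVec, dot_mulVec_left]
      by_contra hq0
      have hAq : Aᵀ.mulVec q ≠ 0 := by
        intro h0
        apply hq0
        have hmem : q ∈ LinearMap.ker Aᵀ.mulVecLin := LinearMap.mem_ker.mpr (by
          rw [Matrix.mulVecLin_apply]; exact h0)
        rw [hkerAt] at hmem
        simpa using hmem
      have hpos := hGi.dotProduct_mulVec_pos hAq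
      simp only [star_trivial] at hpos
      rw [h2] at h1
      rw [h1] at hpos
      simp at hpos
    intro v w hvw
    have hsub : S.mulVec (v - w) = 0 := by rw [Matrix.mulVec_sub, hvw, sub_self]
    exact sub_eq_zero.mp (key _ hsub)
  have hSunit : IsUnit S := Matrix.mulVec_injective_iff_isUnit.mp hSinj
  have hSinv : S⁻¹ * S = 1 := Matrix.nonsing_inv_mul S ((Matrix.isUnit_iff_isUnit_det S).mp hSunit)
  rw [← hlam]
  rw [Matrix.mulVec_mulVec, Matrix.mulVec_mulVec, Matrix.mulVec_mulVec, Matrix.mulVec_mulVec]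
  have hfix : Aᵀ * S⁻¹ * A * Gi * Aᵀ = Aᵀ := by
    calc Aᵀ * S⁻¹ * A * Gi * Aᵀ = Aᵀ * (S⁻¹ * (A * Gi * Aᵀ)) := by
          simp only [Matrix.mul_assoc]
    _ = Aᵀ := by rw [← hS, hSinv, Matrix.mul_one]
  rw [hfix]


lemma clm_apply_eq_sum {d e : ℕ} (T : (Fin d → ℝ) →L[ℝ] (Fin e → ℝ)) (w : Fin d → ℝ) :
    T w = ∑ j, w j • T (Pi.single j 1) := by
  have hw : w = ∑ j, w j • (Pi.single j 1 : Fin d → ℝ) := by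
    funext i
    rw [Finset.sum_apply]
    simp [Pi.single_apply]
  conv_lhs => rw [hw]
  rw [map_sum]
  simp

lemma mulVec_of_clm {d e : ℕ} (T : (Fin d → ℝ) →L[ℝ] (Fin e → ℝ)) (w : Fin d → ℝ) :
    (Matrix.of fun i j => T (Pi.single j 1) i).mulVec w = T w := by
  funext i
  rw [clm_apply_eq_sum T w]
  simp [Matrix.mulVec, dotProduct, Finset.sum_apply, mul_comm]

lemma HasDerivAt.dotProd {d : ℕ} {a b : ℝ → Fin d → ℝ} {a' b' : Fin d → ℝ} {s : ℝ}
    (ha : HasDerivAt a a' s) (hb : HasDerivAt b b' s) :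
    HasDerivAt (fun τ => a τ ⬝ᵥ b τ) (a' ⬝ᵥ b s + a s ⬝ᵥ b') s := by
  have ha' := hasDerivAt_pi.1 ha
  have hb' := hasDerivAt_pi.1 hb
  have h : HasDerivAt (fun τ => ∑ i, a τ i * b τ i)
      (∑ i, (a' i * b s i + a s i * b' i)) s :=
    HasDerivAt.fun_sum (fun i _ => (ha' i).mul (hb' i))
  simpa [dotProduct, Finset.sum_add_distrib] using h

lemma HasDerivAt.matMulVec {d e : ℕ} (M : Matrix (Fin e) (Fin d) ℝ) {V : ℝ → Fin d → ℝ}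
    {V' : Fin d → ℝ} {s : ℝ} (h : HasDerivAt V V' s) :
    HasDerivAt (fun τ => M.mulVec (V τ)) (M.mulVec V') s := by
  rw [hasDerivAt_pi] at h ⊢
  intro i
  have : HasDerivAt (fun τ => ∑ j, M i j * V τ j) (∑ j, M i j * V' j) s :=
    HasDerivAt.fun_sum (fun j _ => (h j).const_mul (M i j))
  simpa [Matrix.mulVec, dotProduct] using this

lemma dot_mulVec_left' {m n : ℕ} (A : Matrix (Fin n) (Fin m) ℝ) (q : Fin n → ℝ)
    (w : Fin m → ℝ) : q ⬝ᵥ A.mulVec w = (Aᵀ.mulVec q) ⬝ᵥ w := by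
  rw [Matrix.dotProduct_mulVec, ← Matrix.mulVec_transpose]

lemma hasDerivAt_half_dot {d : ℕ} {G : Matrix (Fin d) (Fin d) ℝ} (hG : G.IsSymm)
    {V : ℝ → Fin d → ℝ} {V' : Fin d → ℝ} {s : ℝ} (hV : HasDerivAt V V' s) :
    HasDerivAt (fun τ => (1/2 : ℝ) * (V τ ⬝ᵥ G.mulVec (V τ))) ((G.mulVec (V s)) ⬝ᵥ V') s := by
  have h := (hV.dotProd (hV.matMulVec G)).const_mul (1/2 : ℝ)
  have he : (1/2 : ℝ) * (V' ⬝ᵥ G.mulVec (V s) + V s ⬝ᵥ G.mulVec V') = (G.mulVec (V s)) ⬝ᵥ V' := by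
    have h1 : V' ⬝ᵥ G.mulVec (V s) = (G.mulVec (V s)) ⬝ᵥ V' := dotProduct_comm _ _
    have h2 : V s ⬝ᵥ G.mulVec V' = (G.mulVec (V s)) ⬝ᵥ V' := by
      rw [dot_mulVec_left', hG.eq]
    rw [h1, h2]; ring
  rw [← he]
  exact h

lemma DifferentiableAt.dotProd' {E : Type*} [NormedAddCommGroup E] [NormedSpace ℝ E] {d : ℕ}
    {a b : E → Fin d → ℝ} {x : E} (ha : DifferentiableAt ℝ a x) (hb : DifferentiableAt ℝ b x) :
    DifferentiableAt ℝ (fun z => a z ⬝ᵥ b z) x := by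
  simp only [dotProduct]
  exact DifferentiableAt.fun_sum fun i _ =>
    ((differentiableAt_pi.mp ha i)).mul (differentiableAt_pi.mp hb i)

lemma differentiable_mulVec {d e : ℕ} (M : Matrix (Fin e) (Fin d) ℝ) :
    Differentiable ℝ (fun w : Fin d → ℝ => M.mulVec w) := by
  intro w
  apply differentiableAt_pi.mpr
  intro i
  have : DifferentiableAt ℝ (fun w : Fin d → ℝ => ∑ j, M i j * w j) w :=
    DifferentiableAt.fun_sum fun j _ => (differentiableAt_pi.mp differentiableAt_id j).const_mul _
  simpa [Matrix.mulVec, dotProduct] using this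

lemma fderiv_apply_of_line {d : ℕ} {F : Type*} [NormedAddCommGroup F] [NormedSpace ℝ F]
    {f : (Fin d → ℝ) → F} {x v : Fin d → ℝ} {c : F}
    (hf : DifferentiableAt ℝ f x)
    (hline : HasDerivAt (fun s : ℝ => f (x + s • v)) c 0) :
    fderiv ℝ f x v = c := by
  have hl : HasDerivAt (fun s : ℝ => x + s • v) v 0 := by
    have h1 : HasDerivAt (fun s : ℝ => s • v) ((1:ℝ) • v) 0 := (hasDerivAt_id (0:ℝ)).smul_const v
    simpa using h1.const_add x
  have h3 : HasFDerivAt f (fderiv ℝ f x) ((fun s : ℝ => x + s • v) 0) := by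
    simpa using hf.hasFDerivAt
  have h4 := h3.comp_hasDerivAt 0 hl
  exact h4.unique hline

section curves

variable {d e : ℕ} {U : ℝ × (Fin d → ℝ) → Fin e → ℝ}

lemma hasDerivAt_comp_curve (hU : ContDiff ℝ 2 U)
    {p : ℝ → ℝ × (Fin d → ℝ)} {p' : ℝ × (Fin d → ℝ)} {t : ℝ} (hp : HasDerivAt p p' t) :
    HasDerivAt (fun s => U (p s)) (fderiv ℝ U (p t) p') t :=
  (hU.differentiable two_ne_zero (p t)).hasFDerivAt.comp_hasDerivAt t hp

lemma hasDerivAt_fderiv_apply (hU : ContDiff ℝ 2 U)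
    {p : ℝ → ℝ × (Fin d → ℝ)} {p' : ℝ × (Fin d → ℝ)} {t : ℝ} (hp : HasDerivAt p p' t)
    (q : ℝ × (Fin d → ℝ)) :
    HasDerivAt (fun s => fderiv ℝ U (p s) q) (fderiv ℝ (fderiv ℝ U) (p t) p' q) t := by
  have hU' : ContDiff ℝ 1 (fderiv ℝ U) := hU.fderiv_right (by norm_num)
  have h2 : HasDerivAt (fun s => fderiv ℝ U (p s)) (fderiv ℝ (fderiv ℝ U) (p t) p') t :=
    (hU'.differentiable one_ne_zero (p t)).hasFDerivAt.comp_hasDerivAt t hp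
  simpa using h2.clm_apply (hasDerivAt_const t q)

lemma differentiableAt_fderiv_apply (hU : ContDiff ℝ 2 U) (t : ℝ) (z₀ : Fin d → ℝ)
    (q : ℝ × (Fin d → ℝ)) :
    DifferentiableAt ℝ (fun z => fderiv ℝ U (t, z) q) z₀ := by
  have hU' : ContDiff ℝ 1 (fderiv ℝ U) := hU.fderiv_right (by norm_num)
  have h1 : DifferentiableAt ℝ (fun z : Fin d → ℝ => fderiv ℝ U (t, z)) z₀ :=
    ((hU'.differentiable one_ne_zero) (t, z₀)).comp z₀
      ((differentiableAt_const t).prodMk differentiableAt_id)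
  exact h1.clm_apply (differentiableAt_const q)

lemma fderiv_snd_eq (hU : ContDiff ℝ 2 U) (t : ℝ) (z : Fin d → ℝ) (w : Fin d → ℝ) :
    fderiv ℝ (fun z' => U (t, z')) z w = fderiv ℝ U (t, z) (0, w) := by
  have h1 : HasFDerivAt (fun z' : Fin d → ℝ => ((t:ℝ), z'))
      ((0 : (Fin d → ℝ) →L[ℝ] ℝ).prod (ContinuousLinearMap.id ℝ (Fin d → ℝ))) z :=
    (hasFDerivAt_const t z).prodMk (hasFDerivAt_id z)
  have h2 := ((hU.differentiable two_ne_zero (t, z)).hasFDerivAt.comp z h1).fderiv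
  rw [show (fun z' => U (t, z')) = U ∘ Prod.mk t from rfl, h2]
  simp

end curves

lemma mulVec_single_one {d e : ℕ} (M : Matrix (Fin e) (Fin d) ℝ) (k : Fin d) :
    M.mulVec (Pi.single k 1) = fun i => M i k := by
  funext i
  simp [Matrix.mulVec, dotProduct, Pi.single_apply]

lemma vecMul_eq_dot {d e : ℕ} (M : Matrix (Fin e) (Fin d) ℝ) (v : Fin e → ℝ) (k : Fin d) :
    Matrix.vecMul v M k = v ⬝ᵥ M.mulVec (Pi.single k 1) := by
  rw [mulVec_single_one]
  simp [Matrix.vecMul, dotProduct]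


/-- Lagrange equations of the second kind imply the Newton equations with the
reaction forces of the ideal holonomic constraints: if `y` solves
`[L] = Q` on `I`, then `x(t) = u(t, y(t))` solves `G ẍ = f + N`, where
`N = -φ_vᵀ (φ_v G⁻¹ φ_vᵀ)⁻¹ (φ_t + φ_x v + φ_v G⁻¹ f)` with
`φ(t,x,v) = g_t(t,x) + g_x(t,x) v`. -/
theorem lagrange_equations_imply_newton {m n r : ℕ} (hnm : n < m) (hr : r = m - n)
    (a b : ℝ) (D : Set (Fin m → ℝ)) (hD : IsOpen D)
    (Y : Set (Fin r → ℝ)) (hY : IsOpen Y)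
    (G : Matrix (Fin m) (Fin m) ℝ) (hGsymm : G.IsSymm) (hGpd : G.PosDef)
    (f : ℝ → (Fin m → ℝ) → (Fin m → ℝ) → (Fin m → ℝ))
    (hf : ContinuousOn (fun p : ℝ × (Fin m → ℝ) × (Fin m → ℝ) => f p.1 p.2.1 p.2.2)
      (Set.Ioo a b ×ˢ D ×ˢ Set.univ))
    (g : ℝ → (Fin m → ℝ) → (Fin n → ℝ))
    (hg : ContDiff ℝ 2 (fun p : ℝ × (Fin m → ℝ) => g p.1 p.2))
    (gt : ℝ → (Fin m → ℝ) → (Fin n → ℝ))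
    (hgt : ∀ t x, gt t x = deriv (fun s => g s x) t)
    (gx : ℝ → (Fin m → ℝ) → Matrix (Fin n) (Fin m) ℝ)
    (hgx : ∀ t x, gx t x = Matrix.of fun i j => fderiv ℝ (g t) x (Pi.single j 1) i)
    (hgrank : ∀ t x, g t x = 0 → (gx t x).rank = n)
    (u : ℝ → (Fin r → ℝ) → (Fin m → ℝ))
    (hu : ContDiff ℝ 2 (fun p : ℝ × (Fin r → ℝ) => u p.1 p.2))
    (huD : ∀ t : ℝ, ∀ y ∈ Y, u t y ∈ D)
    (hug : ∀ t : ℝ, ∀ y ∈ Y, g t (u t y) = 0)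
    (ut : ℝ → (Fin r → ℝ) → (Fin m → ℝ))
    (hut : ∀ t y, ut t y = deriv (fun s => u s y) t)
    (uy : ℝ → (Fin r → ℝ) → Matrix (Fin m) (Fin r) ℝ)
    (huy : ∀ t y, uy t y = Matrix.of fun i j => fderiv ℝ (u t) y (Pi.single j 1) i)
    (hurank : ∀ t : ℝ, ∀ y ∈ Y, (uy t y).rank = r)
    (φ : ℝ → (Fin m → ℝ) → (Fin m → ℝ) → (Fin n → ℝ))
    (hφ : ∀ t x v, φ t x v = gt t x + (gx t x).mulVec v)
    (φt : ℝ → (Fin m → ℝ) → (Fin m → ℝ) → (Fin n → ℝ))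
    (hφt : ∀ t x v, φt t x v = deriv (fun s => φ s x v) t)
    (φx : ℝ → (Fin m → ℝ) → (Fin m → ℝ) → Matrix (Fin n) (Fin m) ℝ)
    (hφx : ∀ t x v, φx t x v =
      Matrix.of fun i j => fderiv ℝ (fun z => φ t z v) x (Pi.single j 1) i)
    (N : ℝ → (Fin m → ℝ) → (Fin m → ℝ) → (Fin m → ℝ))
    (hN : ∀ t x v, N t x v =
      -((gx t x)ᵀ.mulVec ((gx t x * G⁻¹ * (gx t x)ᵀ)⁻¹.mulVec
        (φt t x v + (φx t x v).mulVec v + (gx t x).mulVec (G⁻¹.mulVec (f t x v))))))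
    (L : ℝ → (Fin r → ℝ) → (Fin r → ℝ) → ℝ)
    (hL : ∀ t y w, L t y w =
      (1 / 2) * ((ut t y + (uy t y).mulVec w) ⬝ᵥ G.mulVec (ut t y + (uy t y).mulVec w)))
    (Q : ℝ → (Fin r → ℝ) → (Fin r → ℝ) → (Fin r → ℝ))
    (hQ : ∀ t y w, Q t y w =
      Matrix.vecMul (f t (u t y) (ut t y + (uy t y).mulVec w)) (uy t y))
    (y : ℝ → Fin r → ℝ)
    (hyC : ContDiffOn ℝ 2 y (Set.Ioo a b))
    (hyY : ∀ t ∈ Set.Ioo a b, y t ∈ Y)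
    (hlag : ∀ t ∈ Set.Ioo a b, lagrangianDeriv L y t = Q t (y t) (deriv y t))
    (x : ℝ → Fin m → ℝ) (hx : ∀ t, x t = u t (y t)) :
    ∀ t ∈ Set.Ioo a b,
      G.mulVec (deriv (deriv x) t) = f t (x t) (deriv x t) + N t (x t) (deriv x t) := by
  intro t₀ ht₀
  classical
  -- identities expressing ut, uy, gt, gx, φ via fderiv of the uncurried maps
  have hutw : ∀ (t : ℝ) (z : Fin r → ℝ), ut t z
      = fderiv ℝ (fun p : ℝ × (Fin r → ℝ) => u p.1 p.2) (t, z) (1, 0) := by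
    intro t z
    rw [hut]
    exact (hasDerivAt_comp_curve hu ((hasDerivAt_id t).prodMk (hasDerivAt_const t z))).deriv
  have huyw : ∀ (t : ℝ) (z : Fin r → ℝ) (w : Fin r → ℝ), (uy t z).mulVec w
      = fderiv ℝ (fun p : ℝ × (Fin r → ℝ) => u p.1 p.2) (t, z) (0, w) := by
    intro t z w
    rw [huy, mulVec_of_clm]
    exact fderiv_snd_eq hu t z w
  have hVid : ∀ (t : ℝ) (z : Fin r → ℝ) (w : Fin r → ℝ), ut t z + (uy t z).mulVec w
      = fderiv ℝ (fun p : ℝ × (Fin r → ℝ) => u p.1 p.2) (t, z) (1, w) := by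
    intro t z w
    rw [hutw, huyw, ← map_add]
    norm_num
  have hgtw : ∀ (t : ℝ) (z : Fin m → ℝ), gt t z
      = fderiv ℝ (fun p : ℝ × (Fin m → ℝ) => g p.1 p.2) (t, z) (1, 0) := by
    intro t z
    rw [hgt]
    exact (hasDerivAt_comp_curve hg ((hasDerivAt_id t).prodMk (hasDerivAt_const t z))).deriv
  have hgxw : ∀ (t : ℝ) (z : Fin m → ℝ) (v : Fin m → ℝ), (gx t z).mulVec v
      = fderiv ℝ (fun p : ℝ × (Fin m → ℝ) => g p.1 p.2) (t, z) (0, v) := by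
    intro t z v
    rw [hgx, mulVec_of_clm]
    exact fderiv_snd_eq hg t z v
  have hφP : ∀ (t : ℝ) (z : Fin m → ℝ) (v : Fin m → ℝ), φ t z v
      = fderiv ℝ (fun p : ℝ × (Fin m → ℝ) => g p.1 p.2) (t, z) (1, v) := by
    intro t z v
    rw [hφ, hgtw, hgxw, ← map_add]
    norm_num
  -- curve facts
  have hy1 : ∀ s ∈ Set.Ioo a b, HasDerivAt y (deriv y s) s := by
    intro s hs
    exact (((hyC.differentiableOn two_ne_zero) s hs).differentiableAt
      (isOpen_Ioo.mem_nhds hs)).hasDerivAt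
  have hxHasD : ∀ s ∈ Set.Ioo a b, HasDerivAt x
      (fderiv ℝ (fun p : ℝ × (Fin r → ℝ) => u p.1 p.2) (s, y s) (1, deriv y s)) s := by
    intro s hs
    have h1 : HasDerivAt (fun τ => (τ, y τ)) (1, deriv y s) s :=
      (hasDerivAt_id s).prodMk (hy1 s hs)
    have h2 := hasDerivAt_comp_curve hu h1
    have hxeq : x = fun τ => u τ (y τ) := funext hx
    rw [hxeq]
    exact h2
  have hxd : ∀ s ∈ Set.Ioo a b, deriv x s
      = fderiv ℝ (fun p : ℝ × (Fin r → ℝ) => u p.1 p.2) (s, y s) (1, deriv y s) :=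
    fun s hs => (hxHasD s hs).deriv
  have hxD : ∀ s ∈ Set.Ioo a b, HasDerivAt x (deriv x s) s := by
    intro s hs
    have h := hxHasD s hs
    rw [← hxd s hs] at h
    exact h
  have hxC : ContDiffOn ℝ 2 x (Set.Ioo a b) := by
    have hxeq : x = fun τ => u τ (y τ) := funext hx
    rw [hxeq]
    exact hu.comp_contDiffOn (contDiffOn_id.prodMk hyC)
  have hx2 : HasDerivAt (deriv x) (deriv (deriv x) t₀) t₀ := by
    have hdx1 : ContDiffOn ℝ 1 (deriv x) (Set.Ioo a b) :=
      hxC.deriv_of_isOpen isOpen_Ioo (by norm_num)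
    exact (((hdx1.differentiableOn one_ne_zero) t₀ ht₀).differentiableAt
      (isOpen_Ioo.mem_nhds ht₀)).hasDerivAt
  -- the w-derivative of L
  have hinner : ∀ (t : ℝ) (z w : Fin r → ℝ) (k : Fin r),
      fderiv ℝ (L t z) w (Pi.single k 1)
        = (G.mulVec (fderiv ℝ (fun p : ℝ × (Fin r → ℝ) => u p.1 p.2) (t, z) (1, w)))
          ⬝ᵥ (fderiv ℝ (fun p : ℝ × (Fin r → ℝ) => u p.1 p.2) (t, z) (0, Pi.single k 1)) := by
    intro t z w k
    set T := fderiv ℝ (fun p : ℝ × (Fin r → ℝ) => u p.1 p.2) (t, z) with hT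
    have hfun : L t z = fun w' => (1/2 : ℝ) * ((T (1, w')) ⬝ᵥ G.mulVec (T (1, w'))) := by
      funext w'
      rw [hL, hVid, hT]
    rw [hfun]
    apply fderiv_apply_of_line
    · have hVdiff : Differentiable ℝ (fun w' : Fin r → ℝ => T (1, w')) :=
        T.differentiable.comp ((differentiable_const (1:ℝ)).prodMk differentiable_id)
      exact (((hVdiff.differentiableAt).dotProd'
        (((differentiable_mulVec G).comp hVdiff).differentiableAt)).const_mul _)
    · have hVline : ∀ s : ℝ, T (1, w + s • (Pi.single k 1 : Fin r → ℝ))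
          = T (1, w) + s • T (0, Pi.single k 1) := by
        intro s
        rw [show ((1:ℝ), w + s • (Pi.single k 1 : Fin r → ℝ))
            = ((1:ℝ), w) + s • ((0:ℝ), (Pi.single k 1 : Fin r → ℝ)) by
          simp [Prod.ext_iff], map_add, _root_.map_smul]
      have hV : HasDerivAt (fun s : ℝ => T (1, w) + s • T (0, Pi.single k 1))
          (T (0, Pi.single k 1)) 0 := by
        have h1 : HasDerivAt (fun s : ℝ => s • T (0, Pi.single k 1))
            ((1:ℝ) • T (0, Pi.single k 1)) 0 := (hasDerivAt_id (0:ℝ)).smul_const _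
        simpa using h1.const_add (T (1, w))
      have h2 := hasDerivAt_half_dot hGsymm hV
      simp only [zero_smul, add_zero] at h2
      have h3 : (fun s : ℝ => (1/2 : ℝ) * ((T (1, w + s • (Pi.single k 1 : Fin r → ℝ)))
          ⬝ᵥ G.mulVec (T (1, w + s • (Pi.single k 1 : Fin r → ℝ)))))
          = fun s : ℝ => (1/2 : ℝ) * ((T (1, w) + s • T (0, Pi.single k 1))
          ⬝ᵥ G.mulVec (T (1, w) + s • T (0, Pi.single k 1))) := by
        funext s
        rw [hVline]
      rw [show (fun s : ℝ => (fun w' => (1/2 : ℝ) * ((T (1, w')) ⬝ᵥ G.mulVec (T (1, w'))))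
          (w + s • (Pi.single k 1 : Fin r → ℝ))) = _ from h3]
      exact h2
  have hcurve : HasDerivAt (fun s => (s, y s)) ((1:ℝ), deriv y t₀) t₀ :=
    (hasDerivAt_id t₀).prodMk (hy1 t₀ ht₀)
  have hsym := (hu.contDiffAt (x := (t₀, y t₀))).isSymmSndFDerivAt (by simp)
  have hZorth : ∀ k : Fin r,
      (G.mulVec (deriv (deriv x) t₀) - f t₀ (x t₀) (deriv x t₀)) ⬝ᵥ
        ((uy t₀ (y t₀)).mulVec (Pi.single k 1)) = 0 := by
    intro k
    have hT1 : deriv (fun s => fderiv ℝ (L s (y s)) (deriv y s) (Pi.single k 1)) t₀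
        = (G.mulVec (deriv (deriv x) t₀)) ⬝ᵥ
            (fderiv ℝ (fun p : ℝ × (Fin r → ℝ) => u p.1 p.2) (t₀, y t₀) (0, Pi.single k 1))
          + (G.mulVec (deriv x t₀)) ⬝ᵥ
            (fderiv ℝ (fderiv ℝ (fun p : ℝ × (Fin r → ℝ) => u p.1 p.2)) (t₀, y t₀)
              (1, deriv y t₀) (0, Pi.single k 1)) := by
      have hev : (fun s => fderiv ℝ (L s (y s)) (deriv y s) (Pi.single k 1)) =ᶠ[nhds t₀]
          (fun s => (G.mulVec (deriv x s)) ⬝ᵥ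
            (fderiv ℝ (fun p : ℝ × (Fin r → ℝ) => u p.1 p.2) (s, y s) (0, Pi.single k 1))) := by
        filter_upwards [isOpen_Ioo.mem_nhds ht₀] with s hs
        rw [hinner, ← hxd s hs]
      rw [hev.deriv_eq]
      have hW1 : HasDerivAt (fun s => G.mulVec (deriv x s))
          (G.mulVec (deriv (deriv x) t₀)) t₀ := hx2.matMulVec G
      have hW2 := hasDerivAt_fderiv_apply hu hcurve (0, (Pi.single k 1 : Fin r → ℝ))
      exact (hW1.dotProd hW2).deriv
    have hT2 : fderiv ℝ (fun z => L t₀ z (deriv y t₀)) (y t₀) (Pi.single k 1)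
        = (G.mulVec (deriv x t₀)) ⬝ᵥ
            (fderiv ℝ (fderiv ℝ (fun p : ℝ × (Fin r → ℝ) => u p.1 p.2)) (t₀, y t₀)
              (0, Pi.single k 1) (1, deriv y t₀)) := by
      have hfun : (fun z => L t₀ z (deriv y t₀)) = fun z =>
          (1/2 : ℝ) * ((fderiv ℝ (fun p : ℝ × (Fin r → ℝ) => u p.1 p.2) (t₀, z) (1, deriv y t₀))
            ⬝ᵥ G.mulVec (fderiv ℝ (fun p : ℝ × (Fin r → ℝ) => u p.1 p.2) (t₀, z)
              (1, deriv y t₀))) := by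
        funext z
        rw [hL, hVid]
      rw [hfun]
      apply fderiv_apply_of_line
      · exact ((differentiableAt_fderiv_apply hu t₀ (y t₀) (1, deriv y t₀)).dotProd'
          (((differentiable_mulVec G) _).comp _
            (differentiableAt_fderiv_apply hu t₀ (y t₀) (1, deriv y t₀)))).const_mul _
      · have hp : HasDerivAt (fun s : ℝ => (t₀, y t₀ + s • (Pi.single k 1 : Fin r → ℝ)))
            ((0:ℝ), (Pi.single k 1 : Fin r → ℝ)) 0 := by
          apply (hasDerivAt_const 0 t₀).prodMk
          have h1 : HasDerivAt (fun s : ℝ => s • (Pi.single k 1 : Fin r → ℝ))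
              ((1:ℝ) • (Pi.single k 1 : Fin r → ℝ)) 0 := (hasDerivAt_id (0:ℝ)).smul_const _
          simpa using h1.const_add (y t₀)
        have hV := hasDerivAt_fderiv_apply hu hp (1, deriv y t₀)
        have h2 := hasDerivAt_half_dot hGsymm hV
        simp only [zero_smul, add_zero] at h2
        rw [hxd t₀ ht₀]
        exact h2
    have hlagk := congrFun (hlag t₀ ht₀) k
    simp only [lagrangianDeriv] at hlagk
    rw [hT1, hT2] at hlagk
    rw [hsym (1, deriv y t₀) (0, (Pi.single k 1 : Fin r → ℝ))] at hlagk
    rw [add_sub_cancel_right] at hlagk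
    have hQk : Q t₀ (y t₀) (deriv y t₀) k
        = (f t₀ (x t₀) (deriv x t₀)) ⬝ᵥ ((uy t₀ (y t₀)).mulVec (Pi.single k 1)) := by
      rw [hQ, vecMul_eq_dot, hVid, ← hxd t₀ ht₀, ← hx t₀]
    rw [hQk] at hlagk
    rw [← huyw] at hlagk
    rw [sub_dotProduct, hlagk, sub_self]
  -- constraint identities
  have hgxuy : ∀ w : Fin r → ℝ,
      (gx t₀ (u t₀ (y t₀))).mulVec ((uy t₀ (y t₀)).mulVec w) = 0 := by
    intro w
    have hdg : DifferentiableAt ℝ (g t₀) (u t₀ (y t₀)) :=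
      ((hg.differentiable two_ne_zero).comp
        ((differentiable_const t₀).prodMk differentiable_id)).differentiableAt
    have hdu : DifferentiableAt ℝ (u t₀) (y t₀) :=
      ((hu.differentiable two_ne_zero).comp
        ((differentiable_const t₀).prodMk differentiable_id)).differentiableAt
    have hloc : (fun z => g t₀ (u t₀ z)) =ᶠ[nhds (y t₀)] (fun _ => (0 : Fin n → ℝ)) := by
      filter_upwards [hY.mem_nhds (hyY t₀ ht₀)] with z hz using hug t₀ z hz
    have hfz : fderiv ℝ (fun z => g t₀ (u t₀ z)) (y t₀) = 0 := by
      rw [hloc.fderiv_eq]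
      exact fderiv_const_apply _
    have hfz' : fderiv ℝ ((g t₀) ∘ (u t₀)) (y t₀) = 0 := hfz
    have hc0 : (fderiv ℝ (g t₀) (u t₀ (y t₀))).comp (fderiv ℝ (u t₀) (y t₀)) = 0 :=
      (fderiv_comp (y t₀) hdg hdu).symm.trans hfz'
    rw [hgx, mulVec_of_clm, huy, mulVec_of_clm]
    have h0 := congrArg (fun (T : (Fin r → ℝ) →L[ℝ] (Fin n → ℝ)) => T w) hc0
    simpa using h0
  have hgcurve : ∀ s ∈ Set.Ioo a b, g s (x s) = 0 := by
    intro s hs; rw [hx]; exact hug s (y s) (hyY s hs)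
  have hφ0 : ∀ s ∈ Set.Ioo a b,
      fderiv ℝ (fun p : ℝ × (Fin m → ℝ) => g p.1 p.2) (s, x s) (1, deriv x s) = 0 := by
    intro s hs
    have hpx : HasDerivAt (fun τ => (τ, x τ)) ((1:ℝ), deriv x s) s :=
      (hasDerivAt_id s).prodMk (hxD s hs)
    have hder := hasDerivAt_comp_curve hg hpx
    have hev : (fun τ => g τ (x τ)) =ᶠ[nhds s] (fun _ => (0 : Fin n → ℝ)) := by
      filter_upwards [isOpen_Ioo.mem_nhds hs] with τ hτ using hgcurve τ hτ
    have h2 : deriv (fun τ => g τ (x τ)) s = 0 := by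
      rw [hev.deriv_eq]; exact deriv_const _ _
    have h1 : deriv (fun τ => g τ (x τ)) s
        = fderiv ℝ (fun p : ℝ × (Fin m → ℝ) => g p.1 p.2) (s, x s) (1, deriv x s) := hder.deriv
    rw [← h1]; exact h2
  have hψ : fderiv ℝ (fderiv ℝ (fun p : ℝ × (Fin m → ℝ) => g p.1 p.2)) (t₀, x t₀)
        (1, deriv x t₀) (1, deriv x t₀)
      + fderiv ℝ (fun p : ℝ × (Fin m → ℝ) => g p.1 p.2) (t₀, x t₀) (0, deriv (deriv x) t₀)
      = 0 := by
    have hpx : HasDerivAt (fun τ => (τ, x τ)) ((1:ℝ), deriv x t₀) t₀ :=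
      (hasDerivAt_id t₀).prodMk (hxD t₀ ht₀)
    have hg' : ContDiff ℝ 1 (fderiv ℝ (fun p : ℝ × (Fin m → ℝ) => g p.1 p.2)) :=
      hg.fderiv_right (by norm_num)
    have hA : HasDerivAt (fun s => fderiv ℝ (fun p : ℝ × (Fin m → ℝ) => g p.1 p.2) (s, x s))
        (fderiv ℝ (fderiv ℝ (fun p : ℝ × (Fin m → ℝ) => g p.1 p.2)) (t₀, x t₀)
          (1, deriv x t₀)) t₀ :=
      (hg'.differentiable one_ne_zero _).hasFDerivAt.comp_hasDerivAt t₀ hpx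
    have hv : HasDerivAt (fun s : ℝ => ((1:ℝ), deriv x s)) ((0:ℝ), deriv (deriv x) t₀) t₀ :=
      (hasDerivAt_const t₀ (1:ℝ)).prodMk hx2
    have hAc := hA.clm_apply hv
    have hev : (fun s => fderiv ℝ (fun p : ℝ × (Fin m → ℝ) => g p.1 p.2) (s, x s)
        (1, deriv x s)) =ᶠ[nhds t₀] (fun _ => (0 : Fin n → ℝ)) := by
      filter_upwards [isOpen_Ioo.mem_nhds ht₀] with s hs using hφ0 s hs
    have h2 : deriv (fun s => fderiv ℝ (fun p : ℝ × (Fin m → ℝ) => g p.1 p.2) (s, x s)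
        (1, deriv x s)) t₀ = 0 := by
      rw [hev.deriv_eq]; exact deriv_const _ _
    have h1 : deriv (fun s => fderiv ℝ (fun p : ℝ × (Fin m → ℝ) => g p.1 p.2) (s, x s)
        (1, deriv x s)) t₀
        = fderiv ℝ (fderiv ℝ (fun p : ℝ × (Fin m → ℝ) => g p.1 p.2)) (t₀, x t₀)
            (1, deriv x t₀) (1, deriv x t₀)
          + fderiv ℝ (fun p : ℝ × (Fin m → ℝ) => g p.1 p.2) (t₀, x t₀)
            (0, deriv (deriv x) t₀) := hAc.deriv
    exact h1.symm.trans h2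
  have hφtval : φt t₀ (x t₀) (deriv x t₀)
      = fderiv ℝ (fderiv ℝ (fun p : ℝ × (Fin m → ℝ) => g p.1 p.2)) (t₀, x t₀)
          (1, 0) (1, deriv x t₀) := by
    rw [hφt]
    have hfun : (fun s => φ s (x t₀) (deriv x t₀))
        = fun s => fderiv ℝ (fun p : ℝ × (Fin m → ℝ) => g p.1 p.2) (s, x t₀)
            (1, deriv x t₀) := by
      funext s; rw [hφP]
    rw [hfun]
    have hp : HasDerivAt (fun s : ℝ => (s, x t₀)) ((1:ℝ), (0 : Fin m → ℝ)) t₀ :=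
      (hasDerivAt_id t₀).prodMk (hasDerivAt_const t₀ (x t₀))
    exact (hasDerivAt_fderiv_apply hg hp (1, deriv x t₀)).deriv
  have hφxval : (φx t₀ (x t₀) (deriv x t₀)).mulVec (deriv x t₀)
      = fderiv ℝ (fderiv ℝ (fun p : ℝ × (Fin m → ℝ) => g p.1 p.2)) (t₀, x t₀)
          (0, deriv x t₀) (1, deriv x t₀) := by
    rw [hφx, mulVec_of_clm]
    have hfun : (fun z => φ t₀ z (deriv x t₀))
        = fun z => fderiv ℝ (fun p : ℝ × (Fin m → ℝ) => g p.1 p.2) (t₀, z)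
            (1, deriv x t₀) := by
      funext z; rw [hφP]
    rw [hfun]
    apply fderiv_apply_of_line
    · exact differentiableAt_fderiv_apply hg t₀ (x t₀) (1, deriv x t₀)
    · have hp : HasDerivAt (fun s : ℝ => (t₀, x t₀ + s • deriv x t₀))
          ((0:ℝ), deriv x t₀) 0 := by
        apply (hasDerivAt_const 0 t₀).prodMk
        have h1 : HasDerivAt (fun s : ℝ => s • deriv x t₀) ((1:ℝ) • deriv x t₀) 0 :=
          (hasDerivAt_id (0:ℝ)).smul_const _
        simpa using h1.const_add (x t₀)
      have hV := hasDerivAt_fderiv_apply hg hp (1, deriv x t₀)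
      simpa using hV
  have hsum : φt t₀ (x t₀) (deriv x t₀) + (φx t₀ (x t₀) (deriv x t₀)).mulVec (deriv x t₀)
      + (gx t₀ (x t₀)).mulVec (deriv (deriv x) t₀) = 0 := by
    rw [hφtval, hφxval, hgxw]
    have hadd : fderiv ℝ (fderiv ℝ (fun p : ℝ × (Fin m → ℝ) => g p.1 p.2)) (t₀, x t₀)
          (1, 0) (1, deriv x t₀)
        + fderiv ℝ (fderiv ℝ (fun p : ℝ × (Fin m → ℝ) => g p.1 p.2)) (t₀, x t₀)
          (0, deriv x t₀) (1, deriv x t₀)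
        = fderiv ℝ (fderiv ℝ (fun p : ℝ × (Fin m → ℝ) => g p.1 p.2)) (t₀, x t₀)
          (1, deriv x t₀) (1, deriv x t₀) := by
      rw [← ContinuousLinearMap.add_apply, ← map_add]
      norm_num
    rw [hadd]
    exact hψ
  -- final assembly
  have hGdet : IsUnit G.det := isUnit_iff_ne_zero.mpr (ne_of_gt hGpd.det_pos)
  have hGinv : G⁻¹ * G = 1 := Matrix.nonsing_inv_mul G hGdet
  set x2 := deriv (deriv x) t₀ with hx2def
  set v0 := deriv x t₀ with hv0def
  set F0 := f t₀ (x t₀) v0 with hF0def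
  set z := G.mulVec x2 - F0 with hzdef
  have hZall : ∀ w, z ⬝ᵥ (uy t₀ (y t₀)).mulVec w = 0 := by
    intro w
    rw [dot_mulVec_left']
    have h0 : (uy t₀ (y t₀))ᵀ.mulVec z = 0 := by
      funext k
      have hk := hZorth k
      rw [dot_mulVec_left'] at hk
      simpa [dotProduct, Pi.single_apply] using hk
    rw [h0, zero_dotProduct]
  have hC : (gx t₀ (x t₀)).mulVec x2
      = -(φt t₀ (x t₀) v0 + (φx t₀ (x t₀) v0).mulVec v0) := by
    funext i
    have hi := congrFun hsum i
    simp only [Pi.add_apply, Pi.zero_apply] at hi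
    simp only [Pi.neg_apply, Pi.add_apply]
    linarith
  have harg : φt t₀ (x t₀) v0 + (φx t₀ (x t₀) v0).mulVec v0
      + (gx t₀ (x t₀)).mulVec (G⁻¹.mulVec F0)
      = -((gx t₀ (x t₀)).mulVec (G⁻¹.mulVec z)) := by
    have h1 : G⁻¹.mulVec z = x2 - G⁻¹.mulVec F0 := by
      rw [hzdef, Matrix.mulVec_sub, Matrix.mulVec_mulVec, hGinv, Matrix.one_mulVec]
    rw [h1, Matrix.mulVec_sub]
    funext i
    have hCi := congrFun hC i
    simp only [Pi.neg_apply, Pi.add_apply] at hCi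
    simp only [Pi.add_apply, Pi.neg_apply, Pi.sub_apply]
    linarith
  have hNval : N t₀ (x t₀) v0 = z := by
    rw [hN, harg, Matrix.mulVec_neg, Matrix.mulVec_neg, neg_neg]
    exact key_linalg (by omega) G⁻¹ (Matrix.posDef_inv_iff.mpr hGpd) (gx t₀ (x t₀))
      (hgrank t₀ (x t₀) (hgcurve t₀ ht₀)) (uy t₀ (y t₀)) (hurank t₀ (y t₀) (hyY t₀ ht₀))
      (fun w => by rw [hx]; exact hgxuy w) z hZall
  rw [hNval, hzdef]
  abel
end
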